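/- arXiv:2410.12495 — 7 statements merged into one kernel-verified Lean document; each statement's English description precedes it below -/
import Mathlib

section
/- For all t ∈ [0, T], the function A(t) = −∫_t^T y(s) ds satisfies A(t) = (√(αβ)/2)·( t − T − √(α/β)·( log(1 + u·e^{−2ω(T−t)}) − log(1 + u) ) ). -/
open Real Set

/-!
With `g(s) = 1 + u·e^{-2ω(T-s)}` we have `y = (√(αβ)/2)·(2 - g)/g`. Since `g' = 2ω(g - 1)` and
`√(α/β)·ω = 1`, the function `s ↦ (√(αβ)/2)·(s - √(α/β)·log g(s))` is an antiderivative of `y`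
wherever `g > 0`. Positivity of `g` on `(-∞, T]` comes from `|u| < 1`, and the theorem is the
fundamental theorem of calculus on `[t, T]`, where `g(T) = 1 + u`.
-/

lemma abs_sub_div_add_lt_one {a b : ℝ} (ha : 0 < a) (hb : 0 < b) : |(a - b) / (a + b)| < 1 := by
  rw [abs_div, abs_of_pos (add_pos ha hb), div_lt_one (add_pos ha hb), abs_lt]
  constructor <;> linarith

lemma one_add_mul_exp_pos {u x : ℝ} (hu : |u| < 1) (hx : x ≤ 0) : 0 < 1 + u * exp x := by
  have hux : |u * exp x| < 1 := by
    rw [abs_mul, abs_of_pos (exp_pos x)]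
    calc |u| * exp x ≤ |u| * 1 := by gcongr; exact exp_le_one_iff.mpr hx
      _ < 1 := by rwa [mul_one]
  linarith [(abs_lt.mp hux).1]

lemma sqrt_div_mul_sqrt_div {a b : ℝ} (ha : 0 < a) (hb : 0 < b) :
    √(a / b) * √(b / a) = 1 := by
  rw [← sqrt_mul (div_pos ha hb).le, div_mul_div_comm, mul_comm b, div_self (by positivity),
    sqrt_one]

section Antiderivative

variable {u ω T : ℝ}

lemma hasDerivAt_one_add_mul_exp (s : ℝ) :
    HasDerivAt (fun x ↦ 1 + u * exp (-2 * ω * (T - x)))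
      (2 * ω * (u * exp (-2 * ω * (T - s)))) s := by
  have hlin : HasDerivAt (fun x ↦ -2 * ω * (T - x)) (2 * ω) s := by
    simpa using ((hasDerivAt_id s).const_sub T).const_mul (-2 * ω)
  exact ((hlin.exp.const_mul u).const_add 1).congr_deriv (by ring)

lemma hasDerivAt_sub_mul_log_one_add_mul_exp {k s : ℝ} (hkω : k * ω = 1)
    (hs : 1 + u * exp (-2 * ω * (T - s)) ≠ 0) :
    HasDerivAt (fun x ↦ x - k * log (1 + u * exp (-2 * ω * (T - x))))
      ((1 - u * exp (-2 * ω * (T - s))) / (1 + u * exp (-2 * ω * (T - s)))) s := by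
  refine ((hasDerivAt_id' s).sub
    (((hasDerivAt_one_add_mul_exp s).log hs).const_mul k)).congr_deriv ?_
  generalize exp (-2 * ω * (T - s)) = E at hs ⊢
  field_simp
  linear_combination -2 * u * E * hkω

lemma integral_div_one_add_mul_exp {k a b : ℝ} (c : ℝ) (hkω : k * ω = 1)
    (hpos : ∀ s ∈ uIcc a b, 0 < 1 + u * exp (-2 * ω * (T - s))) :
    ∫ s in a..b, c / 2 * (1 - u * exp (-2 * ω * (T - s))) / (1 + u * exp (-2 * ω * (T - s))) =
      c / 2 * (b - k * log (1 + u * exp (-2 * ω * (T - b)))) -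
        c / 2 * (a - k * log (1 + u * exp (-2 * ω * (T - a)))) := by
  refine intervalIntegral.integral_eq_sub_of_hasDerivAt (fun s hs ↦
    ((hasDerivAt_sub_mul_log_one_add_mul_exp hkω (hpos s hs).ne').const_mul (c / 2)).congr_deriv
      (mul_div_assoc ..).symm) ?_
  exact (ContinuousOn.div (by fun_prop) (by fun_prop) fun s hs ↦
    (hpos s hs).ne').intervalIntegrable

end Antiderivative

theorem stmt_1_general (α β γ T : ℝ) (hα : 0 < α) (hβ : 0 < β) (hγ : 0 < γ)
    (ω u : ℝ) (hω : ω = Real.sqrt (β / α))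
    (hu : u = (Real.sqrt (α * β) - γ) / (Real.sqrt (α * β) + γ))
    (y : ℝ → ℝ)
    (hy : ∀ t, y t = (Real.sqrt (α * β) / 2) *
      (1 - u * Real.exp (-2 * ω * (T - t))) / (1 + u * Real.exp (-2 * ω * (T - t))))
    (A : ℝ → ℝ) (hA : ∀ t, A t = -∫ s in t..T, y s) :
    ∀ t ∈ Set.Icc (0 : ℝ) T,
      A t = (Real.sqrt (α * β) / 2) *
        (t - T - Real.sqrt (α / β) *
          (Real.log (1 + u * Real.exp (-2 * ω * (T - t))) - Real.log (1 + u))) := by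
  intro t ht
  have hu1 : |u| < 1 := hu ▸ abs_sub_div_add_lt_one (sqrt_pos.mpr (mul_pos hα hβ)) hγ
  have hpos : ∀ s ∈ uIcc t T, 0 < 1 + u * exp (-2 * ω * (T - s)) := fun s hs ↦ by
    have hsT : s ≤ T := (uIcc_of_le ht.2 ▸ hs).2
    have hω0 : 0 ≤ ω := hω ▸ sqrt_nonneg _
    exact one_add_mul_exp_pos hu1 (by nlinarith)
  have hkω : √(α / β) * ω = 1 := hω ▸ sqrt_div_mul_sqrt_div hα hβ
  rw [hA, intervalIntegral.integral_congr (fun s _ ↦ hy s),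
    integral_div_one_add_mul_exp _ hkω hpos]
  simp only [sub_self, mul_zero, exp_zero, mul_one]
  ring

/-- For all `t ∈ [0, T]`, the function `A(t) = −∫_t^T y(s) ds` satisfies
`A(t) = (√(αβ)/2)·(t − T − √(α/β)·(log(1 + u·e^{−2ω(T−t)}) − log(1 + u)))`. -/
theorem stmt_1 (α β γ T : ℝ) (hα : 0 < α) (hβ : 0 < β) (hγ : 0 < γ) (hT : 0 < T)
    (ω u : ℝ) (hω : ω = Real.sqrt (β / α))
    (hu : u = (Real.sqrt (α * β) - γ) / (Real.sqrt (α * β) + γ))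
    (y : ℝ → ℝ)
    (hy : ∀ t, y t = (Real.sqrt (α * β) / 2) *
      (1 - u * Real.exp (-2 * ω * (T - t))) / (1 + u * Real.exp (-2 * ω * (T - t))))
    (A : ℝ → ℝ) (hA : ∀ t, A t = -∫ s in t..T, y s) :
    ∀ t ∈ Set.Icc (0 : ℝ) T,
      A t = (Real.sqrt (α * β) / 2) *
        (t - T - Real.sqrt (α / β) *
          (Real.log (1 + u * Real.exp (-2 * ω * (T - t))) - Real.log (1 + u))) :=
  stmt_1_general α β γ T hα hβ hγ ω u hω hu y hy A hA
end

section
/- For all t ∈ [0, T], one has ∫_t^T e^{−(2/α)·(A(s) − A(t))} ds = √(α/β)·(1 − (1 − u)·e^{−ω(T−t)} − u·e^{−2ω(T−t)})/(1 + u·e^{−2ω(T−t)}). -/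
/-!
Put `D s = e^{ω(T-s)} + u e^{-ω(T-s)}` and `N s = e^{ω(T-s)} - u e^{-ω(T-s)}`, so that
`D' = -ω N`, `N' = -ω D` and `y = (α/2) ω N / D = -(α/2) (log D)'`. Hence
`e^{-(2/α)(A(s) - A(t))} = D s / D t`, whose integral over `[t, T]` is `(N t - N T) / (ω D t)`;
multiplying numerator and denominator by `e^{-ω(T-t)}` gives the closed form.
-/

open Real

namespace Riccati

variable (ω u T : ℝ)

noncomputable def denom (s : ℝ) : ℝ := exp (ω * (T - s)) + u * exp (-ω * (T - s))

noncomputable def numer (s : ℝ) : ℝ := exp (ω * (T - s)) - u * exp (-ω * (T - s))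

variable {ω u T}

lemma exp_neg_mul_denom (s : ℝ) :
    exp (-ω * (T - s)) * denom ω u T s = 1 + u * exp (-2 * ω * (T - s)) := by
  rw [denom, mul_add, mul_left_comm, ← exp_add, ← exp_add,
    show -ω * (T - s) + ω * (T - s) = 0 by ring, exp_zero,
    show -ω * (T - s) + -ω * (T - s) = -2 * ω * (T - s) by ring]

lemma exp_neg_mul_numer (s : ℝ) :
    exp (-ω * (T - s)) * numer ω u T s = 1 - u * exp (-2 * ω * (T - s)) := by
  rw [numer, mul_sub, mul_left_comm, ← exp_add, ← exp_add,
    show -ω * (T - s) + ω * (T - s) = 0 by ring, exp_zero,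
    show -ω * (T - s) + -ω * (T - s) = -2 * ω * (T - s) by ring]

lemma numer_at_self : numer ω u T T = 1 - u := by simp [numer]

lemma denom_pos (hω : 0 ≤ ω) (hu : -1 < u) {s : ℝ} (hs : s ≤ T) : 0 < denom ω u T s := by
  have hle : exp (-2 * ω * (T - s)) ≤ 1 := exp_le_one_iff.mpr (by nlinarith)
  have hpos : 0 < exp (-ω * (T - s)) * denom ω u T s := by
    rw [exp_neg_mul_denom]
    nlinarith [exp_pos (-2 * ω * (T - s))]
  exact pos_of_mul_pos_right hpos (exp_pos _).le

lemma hasDerivAt_mul_sub (c a s : ℝ) : HasDerivAt (fun r => c * (a - r)) (-c) s := by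
  simpa using ((hasDerivAt_id s).const_sub a).const_mul c

@[fun_prop]
lemma continuous_denom : Continuous (denom ω u T) := by
  unfold denom; fun_prop

lemma hasDerivAt_denom (s : ℝ) : HasDerivAt (denom ω u T) (-ω * numer ω u T s) s :=
  ((hasDerivAt_mul_sub ω T s).exp.add
    ((hasDerivAt_mul_sub (-ω) T s).exp.const_mul u)).congr_deriv (by rw [numer]; ring)

lemma hasDerivAt_numer (s : ℝ) : HasDerivAt (numer ω u T) (-ω * denom ω u T s) s :=
  ((hasDerivAt_mul_sub ω T s).exp.sub
    ((hasDerivAt_mul_sub (-ω) T s).exp.const_mul u)).congr_deriv (by rw [denom]; ring)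

lemma integral_denom (hω : ω ≠ 0) (a b : ℝ) :
    ∫ s in a..b, denom ω u T s = (numer ω u T a - numer ω u T b) / ω := by
  have hF : ∀ s ∈ Set.uIcc a b,
      HasDerivAt (fun r => -numer ω u T r / ω) (denom ω u T s) s := fun s _ =>
    ((hasDerivAt_numer s).neg.div_const ω).congr_deriv (by field_simp)
  rw [intervalIntegral.integral_eq_sub_of_hasDerivAt hF
    (continuous_denom.intervalIntegrable a b)]
  ring

lemma integral_numer_div_denom (hω : 0 ≤ ω) (hu : -1 < u) {a b : ℝ}
    (ha : a ≤ T) (hb : b ≤ T) :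
    ∫ s in a..b, ω * numer ω u T s / denom ω u T s =
      log (denom ω u T a) - log (denom ω u T b) := by
  have hD : ∀ s ∈ Set.uIcc a b, denom ω u T s ≠ 0 := fun s hs =>
    (denom_pos hω hu ((Set.mem_uIcc.mp hs).elim (·.2.trans hb) (·.2.trans ha))).ne'
  have hF : ∀ s ∈ Set.uIcc a b, HasDerivAt (fun r => -log (denom ω u T r))
      (ω * numer ω u T s / denom ω u T s) s := fun s hs =>
    ((hasDerivAt_denom s).log (hD s hs)).neg.congr_deriv (by ring)
  have hint : IntervalIntegrable (fun s => ω * numer ω u T s / denom ω u T s)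
      MeasureTheory.volume a b := by
    refine ContinuousOn.intervalIntegrable (ContinuousOn.div ?_ continuous_denom.continuousOn hD)
    exact (continuous_const.mul (by unfold numer; fun_prop)).continuousOn
  rw [intervalIntegral.integral_eq_sub_of_hasDerivAt hF hint]
  ring

end Riccati

open Riccati in
theorem stmt_6_general (α β γ T : ℝ) (hα : 0 < α) (hβ : 0 < β) (hγ : 0 < γ)
    (ω u : ℝ) (hω : ω = Real.sqrt (β / α))
    (hu : u = (Real.sqrt (α * β) - γ) / (Real.sqrt (α * β) + γ))
    (y : ℝ → ℝ)
    (hy : ∀ t, y t = (Real.sqrt (α * β) / 2) *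
      (1 - u * Real.exp (-2 * ω * (T - t))) / (1 + u * Real.exp (-2 * ω * (T - t))))
    (A : ℝ → ℝ) (hA : ∀ t, A t = -∫ s in t..T, y s) :
    ∀ t ∈ Set.Icc (0 : ℝ) T,
      (∫ s in t..T, Real.exp (-(2 / α) * (A s - A t))) =
        Real.sqrt (α / β) *
          (1 - (1 - u) * Real.exp (-ω * (T - t)) - u * Real.exp (-2 * ω * (T - t))) /
          (1 + u * Real.exp (-2 * ω * (T - t))) := by
  rintro t ⟨-, htT⟩
  have hαβ : 0 < √(α * β) := sqrt_pos.mpr (mul_pos hα hβ)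
  have hω0 : 0 < ω := hω ▸ sqrt_pos.mpr (div_pos hβ hα)
  have hωα : ω * α = √(α * β) := by
    rw [hω, show α * β = β / α * (α * α) by field_simp, sqrt_mul (div_pos hβ hα).le,
      sqrt_mul_self hα.le]
  have hu1 : -1 < u := by
    rw [hu, lt_div_iff₀ (by linarith)]; linarith
  have hy' : ∀ s, y s = α / 2 * (ω * numer ω u T s / denom ω u T s) := fun s => by
    rw [hy, ← exp_neg_mul_numer, ← exp_neg_mul_denom, ← hωα, mul_div_assoc,
      mul_div_mul_left _ _ (exp_ne_zero _)]
    ring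
  have hA' : ∀ s ≤ T, A s = α / 2 * (log (denom ω u T T) - log (denom ω u T s)) :=
    fun s hs => by
      simp only [hA, hy', intervalIntegral.integral_const_mul,
        integral_numer_div_denom hω0.le hu1 hs le_rfl]
      ring
  have hexp : ∀ s ∈ Set.uIcc t T,
      exp (-(2 / α) * (A s - A t)) = denom ω u T s / denom ω u T t := fun s hs => by
    have hsT := (Set.uIcc_of_le htT ▸ hs).2
    have hlog : -(2 / α) * (A s - A t) = log (denom ω u T s) - log (denom ω u T t) := by
      rw [hA' s hsT, hA' t htT]; field_simp; ring
    rw [hlog, exp_sub, exp_log (denom_pos hω0.le hu1 hsT), exp_log (denom_pos hω0.le hu1 htT)]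
  rw [intervalIntegral.integral_congr hexp, intervalIntegral.integral_div,
    integral_denom hω0.ne', numer_at_self,
    show √(α / β) = ω⁻¹ by rw [hω, ← sqrt_inv, inv_div],
    ← exp_neg_mul_denom, show 1 - (1 - u) * exp (-ω * (T - t)) - u * exp (-2 * ω * (T - t)) =
      exp (-ω * (T - t)) * (numer ω u T t - (1 - u)) by
      linear_combination -exp_neg_mul_numer (ω := ω) (u := u) (T := T) t]
  field_simp

/-- For all `t ∈ [0, T]`, one has
`∫_t^T e^{−(2/α)(A(s) − A(t))} ds = √(α/β)·(1 − (1−u)e^{−ω(T−t)} − u·e^{−2ω(T−t)})/(1 + u·e^{−2ω(T−t)})`. -/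
theorem stmt_6 (α β γ T : ℝ) (hα : 0 < α) (hβ : 0 < β) (hγ : 0 < γ) (hT : 0 < T)
    (ω u : ℝ) (hω : ω = Real.sqrt (β / α))
    (hu : u = (Real.sqrt (α * β) - γ) / (Real.sqrt (α * β) + γ))
    (y : ℝ → ℝ)
    (hy : ∀ t, y t = (Real.sqrt (α * β) / 2) *
      (1 - u * Real.exp (-2 * ω * (T - t))) / (1 + u * Real.exp (-2 * ω * (T - t))))
    (A : ℝ → ℝ) (hA : ∀ t, A t = -∫ s in t..T, y s) :
    ∀ t ∈ Set.Icc (0 : ℝ) T,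
      (∫ s in t..T, Real.exp (-(2 / α) * (A s - A t))) =
        Real.sqrt (α / β) *
          (1 - (1 - u) * Real.exp (-ω * (T - t)) - u * Real.exp (-2 * ω * (T - t))) /
          (1 + u * Real.exp (-2 * ω * (T - t))) :=
  stmt_6_general α β γ T hα hβ hγ ω u hω hu y hy A hA
end

section
/- (Theorem 3.1, existence) The function P(t) = ( D(t) − C₀ − (ω/(2α))·X(t) + c̃₁·ω²·cosh(ωt) )/( C₁ + 1/(2α) ) satisfies, for all t ∈ [0, T], the equilibrium equation D(t) − C₀ − C₁·P(t) = −c₁(P)·ω²·cosh(ωt) + P(t)/(2α) + ∫_0^t ω·sinh(ω(t−s))·(P(s)/(2α)) ds. -/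
/-!
Put `K = C₁ + 1/(2α)` and `g = (ω/K)(D - C₀) + c̃₁ (ω³/K) cosh(ω ·)`, so that
`X(t) = (1/ω̃) ∫₀ᵗ g(s) sinh(ω̃(t-s)) ds` solves `X'' = ω̃² X + g` with `X(0) = X'(0) = 0`.
Since `ω̃² = ω² - ω²/(2αK)`, the `X`-term of `K P` turns this into `X'' = ω² X + ω P`, which is
also the equation solved by `Y(t) = ∫₀ᵗ sinh(ω(t-s)) P(s) ds`; by uniqueness for this linear ODE,
`Y = X` on `[0, T]`. The equilibrium equation then reduces to `c₁(P) = c̃₁`. But `c₁(P)` only sees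
`Y(T) = A + c̃₁ B` and `Y'(T) = A' + c̃₁ B'`, and with these values `c₁(P) = c̃₁` is the equation
defining `c̃₁`.
-/

open Set MeasureTheory intervalIntegral Real

theorem eqOn_zero_of_hasDerivWithinAt_const_mul {F : ℝ → ℝ} {c a b : ℝ}
    (hF : ∀ x ∈ Icc a b, HasDerivWithinAt F (c * F x) (Icc a b) x) (ha : F a = 0) :
    EqOn F 0 (Icc a b) :=
  eq_zero_of_abs_deriv_le_mul_abs_self_of_eq_zero_right (K := |c|)
    (fun x hx => (hF x hx).continuousWithinAt)
    (fun x hx => (hF x (Ico_subset_Icc_self hx)).mono_of_mem_nhdsWithin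
      (Icc_mem_nhdsGE_of_mem hx))
    ha (fun x _ => (norm_mul c (F x)).le)

theorem eqOn_zero_of_hasDerivWithinAt_sq_mul {Z W : ℝ → ℝ} {c a b : ℝ}
    (hZ : ∀ x ∈ Icc a b, HasDerivWithinAt Z (W x) (Icc a b) x)
    (hW : ∀ x ∈ Icc a b, HasDerivWithinAt W (c ^ 2 * Z x) (Icc a b) x)
    (hZa : Z a = 0) (hWa : W a = 0) :
    EqOn Z 0 (Icc a b) ∧ EqOn W 0 (Icc a b) := by
  -- `W - c Z` solves `U' = -c U`, and then `Z' = c Z`.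
  have hU : EqOn (fun x => W x - c * Z x) 0 (Icc a b) :=
    eqOn_zero_of_hasDerivWithinAt_const_mul (c := -c)
      (fun x hx => ((hW x hx).sub ((hZ x hx).const_mul c)).congr_deriv (by ring))
      (by simp [hZa, hWa])
  have hZ0 : EqOn Z 0 (Icc a b) :=
    eqOn_zero_of_hasDerivWithinAt_const_mul (c := c)
      (fun x hx => (hZ x hx).congr_deriv (sub_eq_zero.1 (hU hx))) hZa
  refine ⟨hZ0, fun x hx => ?_⟩
  simpa [hZ0 hx] using hU hx

theorem hasDerivWithinAt_integral_of_continuousOn {f : ℝ → ℝ} {a b x : ℝ}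
    (hf : ContinuousOn f (Icc a b)) (hx : x ∈ Icc a b) :
    HasDerivWithinAt (fun t => ∫ s in a..t, f s) (f x) (Icc a b) x := by
  have : Fact (x ∈ Icc a b) := ⟨hx⟩
  exact integral_hasDerivWithinAt_right
    ((hf.mono (Icc_subset_Icc_right hx.2)).intervalIntegrable_of_Icc hx.1)
    (hf.stronglyMeasurableAtFilter_nhdsWithin measurableSet_Icc x) (hf x hx)

section Duhamel

variable {f g : ℝ → ℝ} {T ν t x : ℝ}

noncomputable def sinhConv (f : ℝ → ℝ) (ν t : ℝ) : ℝ := ∫ s in (0:ℝ)..t, f s * sinh (ν * (t - s))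

noncomputable def coshConv (f : ℝ → ℝ) (ν t : ℝ) : ℝ := ∫ s in (0:ℝ)..t, f s * cosh (ν * (t - s))

theorem ContinuousOn.intervalIntegrable_of_mem_Icc (hf : ContinuousOn f (Icc 0 T))
    (ht : t ∈ Icc 0 T) : IntervalIntegrable f volume 0 t :=
  (hf.mono (Icc_subset_Icc_right ht.2)).intervalIntegrable_of_Icc ht.1

theorem integral_linear_comb_mul (hf : IntervalIntegrable f volume 0 t)
    (hg : IntervalIntegrable g volume 0 t) {k : ℝ → ℝ} (hk : Continuous k) (a b : ℝ) :
    ∫ s in (0:ℝ)..t, (a * f s + b * g s) * k s =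
      a * (∫ s in (0:ℝ)..t, f s * k s) + b * ∫ s in (0:ℝ)..t, g s * k s := by
  rw [← intervalIntegral.integral_const_mul, ← intervalIntegral.integral_const_mul, ← integral_add
    ((hf.mul_continuousOn hk.continuousOn).const_mul a)
    ((hg.mul_continuousOn hk.continuousOn).const_mul b)]
  exact integral_congr fun s _ => by ring

theorem sinhConv_linear_comb (hf : IntervalIntegrable f volume 0 t)
    (hg : IntervalIntegrable g volume 0 t) (a b : ℝ) :
    sinhConv (fun s => a * f s + b * g s) ν t = a * sinhConv f ν t + b * sinhConv g ν t :=
  integral_linear_comb_mul hf hg (by fun_prop) a b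

theorem coshConv_linear_comb (hf : IntervalIntegrable f volume 0 t)
    (hg : IntervalIntegrable g volume 0 t) (a b : ℝ) :
    coshConv (fun s => a * f s + b * g s) ν t = a * coshConv f ν t + b * coshConv g ν t :=
  integral_linear_comb_mul hf hg (by fun_prop) a b

theorem sinhConv_eqOn (hf : ContinuousOn f (Icc 0 T)) :
    EqOn (sinhConv f ν) (fun t => sinh (ν * t) * (∫ s in (0:ℝ)..t, f s * cosh (ν * s)) -
      cosh (ν * t) * ∫ s in (0:ℝ)..t, f s * sinh (ν * s)) (Icc 0 T) := fun t ht => by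
  have hft := hf.intervalIntegrable_of_mem_Icc ht
  beta_reduce
  rw [sinhConv, ← intervalIntegral.integral_const_mul, ← intervalIntegral.integral_const_mul,
    ← integral_sub ((hft.mul_continuousOn (by fun_prop)).const_mul _)
    ((hft.mul_continuousOn (by fun_prop)).const_mul _)]
  exact integral_congr fun s _ => by rw [mul_sub, sinh_sub]; ring

theorem coshConv_eqOn (hf : ContinuousOn f (Icc 0 T)) :
    EqOn (coshConv f ν) (fun t => cosh (ν * t) * (∫ s in (0:ℝ)..t, f s * cosh (ν * s)) -
      sinh (ν * t) * ∫ s in (0:ℝ)..t, f s * sinh (ν * s)) (Icc 0 T) := fun t ht => by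
  have hft := hf.intervalIntegrable_of_mem_Icc ht
  beta_reduce
  rw [coshConv, ← intervalIntegral.integral_const_mul, ← intervalIntegral.integral_const_mul,
    ← integral_sub ((hft.mul_continuousOn (by fun_prop)).const_mul _)
    ((hft.mul_continuousOn (by fun_prop)).const_mul _)]
  exact integral_congr fun s _ => by rw [mul_sub, cosh_sub]; ring

theorem hasDerivWithinAt_sinhConv (hf : ContinuousOn f (Icc 0 T)) (hx : x ∈ Icc 0 T) :
    HasDerivWithinAt (sinhConv f ν) (ν * coshConv f ν x) (Icc 0 T) x := by
  have hc := hasDerivWithinAt_integral_of_continuousOn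
    (f := fun s => f s * cosh (ν * s)) (by fun_prop) hx
  have hs := hasDerivWithinAt_integral_of_continuousOn
    (f := fun s => f s * sinh (ν * s)) (by fun_prop) hx
  have hsinh := (((hasDerivAt_id' x).const_mul ν).sinh).hasDerivWithinAt (s := Icc 0 T) (x := x)
  have hcosh := (((hasDerivAt_id' x).const_mul ν).cosh).hasDerivWithinAt (s := Icc 0 T) (x := x)
  refine ((hsinh.mul hc).sub (hcosh.mul hs)).congr_deriv ?_
    |>.congr (fun t ht => sinhConv_eqOn hf ht) (sinhConv_eqOn hf hx)
  rw [coshConv_eqOn hf hx]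
  ring

theorem hasDerivWithinAt_coshConv (hf : ContinuousOn f (Icc 0 T)) (hx : x ∈ Icc 0 T) :
    HasDerivWithinAt (coshConv f ν) (ν * sinhConv f ν x + f x) (Icc 0 T) x := by
  have hc := hasDerivWithinAt_integral_of_continuousOn
    (f := fun s => f s * cosh (ν * s)) (by fun_prop) hx
  have hs := hasDerivWithinAt_integral_of_continuousOn
    (f := fun s => f s * sinh (ν * s)) (by fun_prop) hx
  have hsinh := (((hasDerivAt_id' x).const_mul ν).sinh).hasDerivWithinAt (s := Icc 0 T) (x := x)
  have hcosh := (((hasDerivAt_id' x).const_mul ν).cosh).hasDerivWithinAt (s := Icc 0 T) (x := x)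
  refine ((hcosh.mul hc).sub (hsinh.mul hs)).congr_deriv ?_
    |>.congr (fun t ht => coshConv_eqOn hf ht) (coshConv_eqOn hf hx)
  rw [sinhConv_eqOn hf hx]
  linear_combination f x * cosh_sq_sub_sinh_sq (ν * x)

theorem sinhConv_eq_of_mul_eq {P : ℝ → ℝ} {ω ω' : ℝ} (hω' : ω' ≠ 0)
    (hg : ContinuousOn g (Icc 0 T)) (hP : ContinuousOn P (Icc 0 T))
    (hPg : ∀ x ∈ Icc 0 T, ω * P x = g x + (ω' ^ 2 - ω ^ 2) * (sinhConv g ω' x / ω'))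
    (ht : t ∈ Icc 0 T) :
    sinhConv P ω t = sinhConv g ω' t / ω' ∧ ω * coshConv P ω t = coshConv g ω' t := by
  obtain ⟨hZ, hW⟩ := eqOn_zero_of_hasDerivWithinAt_sq_mul (c := ω)
    (Z := fun x => sinhConv g ω' x / ω' - sinhConv P ω x)
    (W := fun x => coshConv g ω' x - ω * coshConv P ω x)
    (fun x hx => (((hasDerivWithinAt_sinhConv hg hx).div_const ω').sub
      (hasDerivWithinAt_sinhConv hP hx)).congr_deriv (by field_simp))
    (fun x hx => ((hasDerivWithinAt_coshConv hg hx).sub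
      ((hasDerivWithinAt_coshConv hP hx).const_mul ω)).congr_deriv
        (by rw [mul_add, hPg x hx]; field_simp; ring))
    (by simp [sinhConv]) (by simp [coshConv])
  exact ⟨(sub_eq_zero.1 (hZ ht)).symm, (sub_eq_zero.1 (hW ht)).symm⟩

end Duhamel

theorem conv_of_explicit_solution {D X P : ℝ → ℝ} {T α ω ω' K C₀ c t : ℝ} (hα : α ≠ 0)
    (hK : K ≠ 0) (hω' : ω' ≠ 0) (hsq : ω' ^ 2 - ω ^ 2 = -(ω ^ 2 / (2 * α * K)))
    (hD : ContinuousOn D (Icc 0 T))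
    (hX : ∀ t, X t = ω / (ω' * K) * sinhConv (fun s => D s - C₀) ω' t +
      c * (ω ^ 3 / (ω' * K)) * sinhConv (fun s => cosh (ω * s)) ω' t)
    (hP : ∀ t, P t = (D t - C₀ - ω / (2 * α) * X t + c * ω ^ 2 * cosh (ω * t)) / K)
    (ht : t ∈ Icc 0 T) :
    sinhConv P ω t = X t ∧ ω * coshConv P ω t = ω / K * coshConv (fun s => D s - C₀) ω' t +
      c * (ω ^ 3 / K) * coshConv (fun s => cosh (ω * s)) ω' t := by
  obtain ⟨g, hg_def⟩ : ∃ g : ℝ → ℝ,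
      g = fun s => ω / K * (D s - C₀) + c * ω ^ 3 / K * cosh (ω * s) := ⟨_, rfl⟩
  have hDc : ContinuousOn (fun s => D s - C₀) (Icc 0 T) := hD.sub continuousOn_const
  have hg : ContinuousOn g (Icc 0 T) := hg_def ▸ by fun_prop
  have hint : ∀ t ∈ Icc 0 T, IntervalIntegrable (fun s => D s - C₀) volume 0 t ∧
      IntervalIntegrable (fun s => cosh (ω * s)) volume 0 t := fun t ht =>
    ⟨hDc.intervalIntegrable_of_mem_Icc ht,
      (by fun_prop : Continuous fun s => cosh (ω * s)).intervalIntegrable 0 t⟩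
  have hXg : ∀ t ∈ Icc 0 T, X t = sinhConv g ω' t / ω' := fun t ht => by
    rw [hX, hg_def, sinhConv_linear_comb (hint t ht).1 (hint t ht).2]
    field_simp
  have hXc : ContinuousOn X (Icc 0 T) := fun t ht =>
    ((hasDerivWithinAt_sinhConv hg ht).continuousWithinAt.div_const ω').congr hXg (hXg t ht)
  have hPc : ContinuousOn P (Icc 0 T) := by
    refine ContinuousOn.congr ?_ fun t _ => hP t
    fun_prop
  have hPg : ∀ t ∈ Icc 0 T, ω * P t = g t + (ω' ^ 2 - ω ^ 2) * (sinhConv g ω' t / ω') :=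
    fun t ht => by
      rw [hP, ← hXg t ht, hg_def, hsq]
      field_simp
      ring
  obtain ⟨hS, hC⟩ := sinhConv_eq_of_mul_eq hω' hg hPc hPg ht
  refine ⟨hS.trans (hXg t ht).symm, ?_⟩
  rw [hC, hg_def, coshConv_linear_comb (hint t ht).1 (hint t ht).2]
  ring

theorem boundary_coeff_eq {P : ℝ → ℝ} {α β γ ω T A B A' B' c cP : ℝ} (hα : α ≠ 0) (hω : ω ≠ 0)
    (hden₀ : γ * ω * sinh (ω * T) + β * cosh (ω * T) ≠ 0)
    (hcP : cP = (γ * (∫ s in (0:ℝ)..T, cosh (ω * (T - s)) * (P s / (2 * α))) +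
        β * ∫ s in (0:ℝ)..T, (sinh (ω * (T - s)) / ω) * (P s / (2 * α))) /
      (γ * ω * sinh (ω * T) + β * cosh (ω * T)))
    (hden : 2 * α * ω * (γ * ω * sinh (ω * T) + β * cosh (ω * T)) - γ * B' - β * B ≠ 0)
    (hc : c = (γ * A' + β * A) /
      (2 * α * ω * (γ * ω * sinh (ω * T) + β * cosh (ω * T)) - γ * B' - β * B))
    (hS : sinhConv P ω T = A + c * B) (hC : ω * coshConv P ω T = A' + c * B') :
    cP = c := by
  have hcoshInt : ∫ s in (0:ℝ)..T, cosh (ω * (T - s)) * (P s / (2 * α)) =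
      coshConv P ω T / (2 * α) := by
    rw [coshConv, ← intervalIntegral.integral_div]
    exact integral_congr fun s _ => by ring
  have hsinhInt : ∫ s in (0:ℝ)..T, sinh (ω * (T - s)) / ω * (P s / (2 * α)) =
      sinhConv P ω T / (2 * α * ω) := by
    rw [sinhConv, ← intervalIntegral.integral_div]
    exact integral_congr fun s _ => by field_simp
  have hfix : c * (2 * α * ω * (γ * ω * sinh (ω * T) + β * cosh (ω * T)) - γ * B' - β * B) =
      γ * A' + β * A := by
    rw [hc, div_mul_cancel₀ _ hden]
  rw [hcP, hcoshInt, hsinhInt, hS, div_eq_iff hden₀]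
  field_simp
  linear_combination γ * hC - hfix

theorem stmt_14_general (α β γ T : ℝ) (hα : 0 < α) (hβ : 0 < β) (hγ : 0 < γ) (hT : 0 < T)
    (ω : ℝ) (hω : ω = Real.sqrt (β / α))
    (c₁ : (ℝ → ℝ) → ℝ)
    (hc₁ : ∀ Φ : ℝ → ℝ, c₁ Φ =
      (γ * (∫ s in (0:ℝ)..T, Real.cosh (ω * (T - s)) * (Φ s / (2 * α))) +
        β * ∫ s in (0:ℝ)..T, (Real.sinh (ω * (T - s)) / ω) * (Φ s / (2 * α))) /
      (γ * ω * Real.sinh (ω * T) + β * Real.cosh (ω * T)))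
    (C₀ C₁ : ℝ) (hC₁ : 0 < C₁)
    (D : ℝ → ℝ) (hD : ContinuousOn D (Set.Icc 0 T))
    (ω' : ℝ) (hω' : ω' = ω * Real.sqrt (C₁ / (C₁ + 1 / (2 * α))))
    (A B A' B' : ℝ)
    (hA : A = (ω / (ω' * (C₁ + 1 / (2 * α)))) *
      ∫ s in (0:ℝ)..T, (D s - C₀) * Real.sinh (ω' * (T - s)))
    (hB : B = (ω ^ 3 / (ω' * (C₁ + 1 / (2 * α)))) *
      ∫ s in (0:ℝ)..T, Real.cosh (ω * s) * Real.sinh (ω' * (T - s)))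
    (hA' : A' = (ω / (C₁ + 1 / (2 * α))) *
      ∫ s in (0:ℝ)..T, (D s - C₀) * Real.cosh (ω' * (T - s)))
    (hB' : B' = (ω ^ 3 / (C₁ + 1 / (2 * α))) *
      ∫ s in (0:ℝ)..T, Real.cosh (ω * s) * Real.cosh (ω' * (T - s)))
    (hden : 2 * α * ω * (γ * ω * Real.sinh (ω * T) + β * Real.cosh (ω * T))
      - γ * B' - β * B ≠ 0)
    (c1tilde : ℝ)
    (hc1tilde : c1tilde = (γ * A' + β * A) /
      (2 * α * ω * (γ * ω * Real.sinh (ω * T) + β * Real.cosh (ω * T)) - γ * B' - β * B))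
    (X : ℝ → ℝ)
    (hX : ∀ t, X t = (ω / (ω' * (C₁ + 1 / (2 * α)))) *
        (∫ s in (0:ℝ)..t, (D s - C₀) * Real.sinh (ω' * (t - s))) +
      c1tilde * (ω ^ 3 / (ω' * (C₁ + 1 / (2 * α)))) *
        ∫ s in (0:ℝ)..t, Real.cosh (ω * s) * Real.sinh (ω' * (t - s)))
    (P : ℝ → ℝ)
    (hP : ∀ t, P t = (D t - C₀ - (ω / (2 * α)) * X t + c1tilde * ω ^ 2 * Real.cosh (ω * t)) /
      (C₁ + 1 / (2 * α))) :
    ∀ t ∈ Set.Icc (0 : ℝ) T,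
      D t - C₀ - C₁ * P t = -(c₁ P) * ω ^ 2 * Real.cosh (ω * t) + P t / (2 * α) +
        ∫ s in (0:ℝ)..t, ω * Real.sinh (ω * (t - s)) * (P s / (2 * α)) := by
  have hK : 0 < C₁ + 1 / (2 * α) := by positivity
  have hω₀ : 0 < ω := hω ▸ sqrt_pos.2 (div_pos hβ hα)
  have hω'₀ : 0 < ω' := hω' ▸ mul_pos hω₀ (sqrt_pos.2 (div_pos hC₁ hK))
  have hsq : ω' ^ 2 - ω ^ 2 = -(ω ^ 2 / (2 * α * (C₁ + 1 / (2 * α)))) := by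
    rw [hω', mul_pow, sq_sqrt (div_pos hC₁ hK).le]
    field_simp
    ring
  have hconv := fun t (ht : t ∈ Icc 0 T) =>
    conv_of_explicit_solution hα.ne' hK.ne' hω'₀.ne' hsq hD hX hP ht
  have hTT : T ∈ Icc 0 T := ⟨hT.le, le_rfl⟩
  have hc₁P : c₁ P = c1tilde := by
    have := sinh_pos_iff.2 (mul_pos hω₀ hT)
    refine boundary_coeff_eq hα.ne' hω₀.ne' (by positivity) (hc₁ P) hden hc1tilde ?_ ?_
    · rw [(hconv T hTT).1, hX, hA, hB]
      ring
    · rw [(hconv T hTT).2, hA', hB', coshConv, coshConv]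
      ring
  intro t ht
  have hsinhInt : ∫ s in (0:ℝ)..t, ω * sinh (ω * (t - s)) * (P s / (2 * α)) =
      ω / (2 * α) * sinhConv P ω t := by
    rw [sinhConv, ← intervalIntegral.integral_const_mul]
    exact integral_congr fun s _ => by ring
  rw [hsinhInt, (hconv t ht).1, hc₁P, hP t]
  field_simp
  ring

/-- (Theorem 3.1, existence) The function
`P(t) = (D(t) − C₀ − (ω/(2α))·X(t) + c1tilde·ω²·cosh(ωt))/(C₁ + 1/(2α))` satisfies, for
all `t ∈ [0, T]`, the equilibrium equation
`D(t) − C₀ − C₁·P(t) = −c₁(P)·ω²·cosh(ωt) + P(t)/(2α) + ∫_0^t ω·sinh(ω(t−s))·(P(s)/(2α)) ds`. -/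
theorem stmt_14 (α β γ T : ℝ) (hα : 0 < α) (hβ : 0 < β) (hγ : 0 < γ) (hT : 0 < T)
    (ω u : ℝ) (hω : ω = Real.sqrt (β / α))
    (hu : u = (Real.sqrt (α * β) - γ) / (Real.sqrt (α * β) + γ))
    (c₁ : (ℝ → ℝ) → ℝ)
    (hc₁ : ∀ Φ : ℝ → ℝ, c₁ Φ =
      (γ * (∫ s in (0:ℝ)..T, Real.cosh (ω * (T - s)) * (Φ s / (2 * α))) +
        β * ∫ s in (0:ℝ)..T, (Real.sinh (ω * (T - s)) / ω) * (Φ s / (2 * α))) /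
      (γ * ω * Real.sinh (ω * T) + β * Real.cosh (ω * T)))
    (C₀ C₁ : ℝ) (hC₁ : 0 < C₁)
    (D : ℝ → ℝ) (hD : ContinuousOn D (Set.Icc 0 T))
    (ω' : ℝ) (hω' : ω' = ω * Real.sqrt (C₁ / (C₁ + 1 / (2 * α))))
    (A B A' B' : ℝ)
    (hA : A = (ω / (ω' * (C₁ + 1 / (2 * α)))) *
      ∫ s in (0:ℝ)..T, (D s - C₀) * Real.sinh (ω' * (T - s)))
    (hB : B = (ω ^ 3 / (ω' * (C₁ + 1 / (2 * α)))) *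
      ∫ s in (0:ℝ)..T, Real.cosh (ω * s) * Real.sinh (ω' * (T - s)))
    (hA' : A' = (ω / (C₁ + 1 / (2 * α))) *
      ∫ s in (0:ℝ)..T, (D s - C₀) * Real.cosh (ω' * (T - s)))
    (hB' : B' = (ω ^ 3 / (C₁ + 1 / (2 * α))) *
      ∫ s in (0:ℝ)..T, Real.cosh (ω * s) * Real.cosh (ω' * (T - s)))
    (hden : 2 * α * ω * (γ * ω * Real.sinh (ω * T) + β * Real.cosh (ω * T))
      - γ * B' - β * B ≠ 0)
    (c1tilde : ℝ)
    (hc1tilde : c1tilde = (γ * A' + β * A) /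
      (2 * α * ω * (γ * ω * Real.sinh (ω * T) + β * Real.cosh (ω * T)) - γ * B' - β * B))
    (X : ℝ → ℝ)
    (hX : ∀ t, X t = (ω / (ω' * (C₁ + 1 / (2 * α)))) *
        (∫ s in (0:ℝ)..t, (D s - C₀) * Real.sinh (ω' * (t - s))) +
      c1tilde * (ω ^ 3 / (ω' * (C₁ + 1 / (2 * α)))) *
        ∫ s in (0:ℝ)..t, Real.cosh (ω * s) * Real.sinh (ω' * (t - s)))
    (P : ℝ → ℝ)
    (hP : ∀ t, P t = (D t - C₀ - (ω / (2 * α)) * X t + c1tilde * ω ^ 2 * Real.cosh (ω * t)) /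
      (C₁ + 1 / (2 * α))) :
    ∀ t ∈ Set.Icc (0 : ℝ) T,
      D t - C₀ - C₁ * P t = -(c₁ P) * ω ^ 2 * Real.cosh (ω * t) + P t / (2 * α) +
        ∫ s in (0:ℝ)..t, ω * Real.sinh (ω * (t - s)) * (P s / (2 * α)) :=
  stmt_14_general α β γ T hα hβ hγ hT ω hω c₁ hc₁ C₀ C₁ hC₁ D hD ω' hω' A B A' B' hA hB hA' hB' hden
    c1tilde hc1tilde X hX P hP
end

section
/- (Theorem 3.1, uniqueness) If P and P̃ are two continuous functions on [0, T] that both satisfy, for all t ∈ [0, T], the equilibrium equation D(t) − C₀ − C₁·Φ(t) = −c₁(Φ)·ω²·cosh(ωt) + Φ(t)/(2α) + ∫_0^t ω·sinh(ω(t−s))·(Φ(s)/(2α)) ds (with Φ = P and Φ = P̃ respectively), and if 2αω·(γ·ω·sinh(ωT) + β·cosh(ωT)) − γ·B′ − β·B ≠ 0, where B = (ω³/(ω̃·(C₁ + 1/(2α))))·∫_0^T cosh(ωs)·sinh(ω̃(T−s)) ds and B′ = (ω³/(C₁ + 1/(2α)))·∫_0^T cosh(ωs)·cosh(ω̃(T−s))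 ds with ω̃ = ω·√(C₁/(C₁ + 1/(2α))), then P(t) = P̃(t) for all t ∈ [0, T]. -/
/-!
Put `a = C₁ + 1/(2α)` and `κ = c₁(P) − c₁(P̃)`. The difference `Q = P − P̃` solves the Volterra
equation `a Q(t) = κ ω² cosh(ωt) − (ω/2α) ∫₀ᵗ sinh(ω(t−s)) Q(s) ds`. Since
`(ω² − ν²) ∫₀ᵗ sinh(ω(t−s)) cosh(νs) ds = ω (cosh ωt − cosh νt)`, the function `cosh(ω̃t)` solves
it exactly when `ω̃² = ω² − ω²/(2αa)`, which is the `ω̃` of the statement; Grönwall's inequality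
makes continuous solutions unique, so `Q = κ (ω²/a) cosh(ω̃t)`. The formula for `c₁` is linear in
`Φ`, and evaluating it on this `Q` gives `κ = κ (γB′ + βB) / (2αω(γω sinh ωT + β cosh ωT))`; the
nondegeneracy condition then forces `κ = 0`, hence `Q = 0`.
-/

open Real Set Topology intervalIntegral
open MeasureTheory (volume)

section Volterra

variable {E : Type*} [NormedAddCommGroup E]

theorem eqOn_zero_of_norm_le_mul_integral_norm {h : ℝ → E} {a b C : ℝ}
    (hh : ContinuousOn h (Icc a b))
    (hle : ∀ t ∈ Icc a b, ‖h t‖ ≤ C * ∫ s in a..t, ‖h s‖) : EqOn h 0 (Icc a b) := by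
  intro t ht
  have hab : a ≤ b := ht.1.trans ht.2
  have hn : ContinuousOn (fun s => ‖h s‖) (Icc a b) := hh.norm
  have hprim_nonneg : ∀ x ∈ Icc a b, 0 ≤ ∫ s in a..x, ‖h s‖ := fun x hx =>
    integral_nonneg hx.1 fun _ _ => norm_nonneg _
  have hprim : ∀ x ∈ Icc a b, ∫ s in a..x, ‖h s‖ = 0 := by
    refine eq_zero_of_abs_deriv_le_mul_abs_self_of_eq_zero_right (f' := fun x => ‖h x‖) (K := C)
      ?_ (fun x hx => ?_) integral_same fun x hx => ?_
    · simpa only [uIcc_of_le hab] using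
        continuousOn_primitive_interval' (hn.intervalIntegrable_of_Icc hab) left_mem_uIcc
    · have hIcc : Icc a b ∈ 𝓝[>] x := Icc_mem_nhdsGT_of_mem hx
      exact integral_hasDerivWithinAt_right
        ((hn.mono (Icc_subset_Icc le_rfl hx.2.le)).intervalIntegrable_of_Icc hx.1)
        ⟨Icc a b, hIcc, hn.aestronglyMeasurable measurableSet_Icc⟩
        ((hn x (Ico_subset_Icc_self hx)).mono_of_mem_nhdsWithin hIcc)
    · rw [norm_norm, Real.norm_of_nonneg (hprim_nonneg x (Ico_subset_Icc_self hx))]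
      exact hle x (Ico_subset_Icc_self hx)
  show h t = 0
  simpa [hprim t ht] using hle t ht

theorem eqOn_zero_of_volterra [NormedSpace ℝ E] {k : ℝ → ℝ} {h : ℝ → E} {T : ℝ}
    (hk : ContinuousOn k (Icc 0 T)) (hh : ContinuousOn h (Icc 0 T))
    (heq : ∀ t ∈ Icc 0 T, h t = ∫ s in 0..t, k (t - s) • h s) : EqOn h 0 (Icc 0 T) := by
  obtain ⟨M, hM⟩ := isCompact_Icc.exists_bound_of_continuousOn hk
  refine eqOn_zero_of_norm_le_mul_integral_norm (C := M) hh fun t ht => ?_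
  rw [heq t ht, ← integral_const_mul]
  refine norm_integral_le_of_norm_le ht.1 (.of_forall fun s hs => ?_)
    (((hh.mono (Icc_subset_Icc le_rfl ht.2)).norm.intervalIntegrable_of_Icc ht.1).const_mul M)
  rw [norm_smul]
  exact mul_le_mul_of_nonneg_right (hM _ ⟨by linarith [hs.2], by linarith [hs.1, ht.2]⟩)
    (norm_nonneg _)

end Volterra

theorem sq_sub_sq_mul_integral_sinh_mul_cosh (ω ν t : ℝ) :
    (ω ^ 2 - ν ^ 2) * ∫ s in 0..t, sinh (ω * (t - s)) * cosh (ν * s) =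
      ω * (cosh (ω * t) - cosh (ν * t)) := by
  have hlin : ∀ s, HasDerivAt (fun s => ω * (t - s)) (-ω) s := fun s => by
    simpa using ((hasDerivAt_id s).const_sub t).const_mul ω
  have hmul : ∀ s, HasDerivAt (fun s => ν * s) ν s := fun s => by
    simpa using (hasDerivAt_id s).const_mul ν
  rw [← integral_const_mul, integral_eq_sub_of_hasDerivAt
    (f := fun s =>
      -(ω * cosh (ω * (t - s)) * cosh (ν * s) + ν * sinh (ω * (t - s)) * sinh (ν * s)))
    (fun s _ => ?_) (by apply Continuous.intervalIntegrable; fun_prop)]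
  · simp only [sub_self, mul_zero, cosh_zero, sinh_zero, sub_zero]
    ring
  · exact ((((hlin s).cosh.const_mul ω).mul (hmul s).cosh).add
      (((hlin s).sinh.const_mul ν).mul (hmul s).sinh)).neg.congr_deriv (by ring)

theorem mul_integral_sinh_mul_cosh_comm {ω ν : ℝ} (t : ℝ) (h : ω ^ 2 ≠ ν ^ 2) :
    ν * ∫ s in 0..t, sinh (ω * (t - s)) * cosh (ν * s) =
      ω * ∫ s in 0..t, sinh (ν * (t - s)) * cosh (ω * s) := by
  refine mul_left_cancel₀ (sub_ne_zero.2 h) ?_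
  linear_combination ν * sq_sub_sq_mul_integral_sinh_mul_cosh ω ν t +
    ω * sq_sub_sq_mul_integral_sinh_mul_cosh ν ω t

theorem integral_cosh_mul_cosh_comm (ω ν t : ℝ) :
    ∫ s in 0..t, cosh (ω * (t - s)) * cosh (ν * s) =
      ∫ s in 0..t, cosh (ω * s) * cosh (ν * (t - s)) := by
  have h := integral_comp_sub_left (a := 0) (b := t)
    (fun s => cosh (ω * s) * cosh (ν * (t - s))) t
  simp only [sub_self, sub_zero, sub_sub_cancel] at h
  exact h

theorem eqOn_mul_cosh_of_volterra_sinh {ω ν c k T : ℝ} {q : ℝ → ℝ} (hω : ω ≠ 0)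
    (hc : c * ω = ω ^ 2 - ν ^ 2) (hq : ContinuousOn q (Icc 0 T))
    (heq : ∀ t ∈ Icc 0 T, q t = k * cosh (ω * t) - c * ∫ s in 0..t, sinh (ω * (t - s)) * q s) :
    EqOn q (fun t => k * cosh (ν * t)) (Icc 0 T) := by
  have hcosh : ∀ t, c * ∫ s in 0..t, sinh (ω * (t - s)) * cosh (ν * s) =
      cosh (ω * t) - cosh (ν * t) := fun t => by
    refine mul_left_cancel₀ hω ?_
    rw [← mul_assoc, mul_comm ω c, hc, sq_sub_sq_mul_integral_sinh_mul_cosh]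
  have hzero : EqOn (fun t => q t - k * cosh (ν * t)) 0 (Icc 0 T) := by
    refine eqOn_zero_of_volterra (k := fun x => -c * sinh (ω * x)) (by fun_prop)
      (hq.sub (by fun_prop)) fun t ht => ?_
    have hint : IntervalIntegrable (fun s => sinh (ω * (t - s)) * q s) volume 0 t :=
      ((Continuous.continuousOn (by fun_prop)).mul
        (hq.mono (Icc_subset_Icc le_rfl ht.2))).intervalIntegrable_of_Icc ht.1
    have hsplit : ∫ s in 0..t, (-c * sinh (ω * (t - s))) • (q s - k * cosh (ν * s)) =
        -c * ((∫ s in 0..t, sinh (ω * (t - s)) * q s) -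
          k * ∫ s in 0..t, sinh (ω * (t - s)) * cosh (ν * s)) := by
      rw [← integral_const_mul,
        ← integral_sub hint (Continuous.intervalIntegrable (by fun_prop) _ _), ← integral_const_mul]
      simp only [smul_eq_mul]
      congr 1 with s
      ring
    rw [hsplit, heq t ht]
    linear_combination (-k) * hcosh t
  intro t ht
  simpa [sub_eq_zero] using hzero ht

theorem sub_eq_volterra_of_equilibrium {α ω C₀ C₁ c c' T : ℝ} {D P P' : ℝ → ℝ}
    (hPc : ContinuousOn P (Icc 0 T)) (hP'c : ContinuousOn P' (Icc 0 T))
    (hP : ∀ t ∈ Icc 0 T, D t - C₀ - C₁ * P t = -c * ω ^ 2 * cosh (ω * t) + P t / (2 * α) +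
      ∫ s in 0..t, ω * sinh (ω * (t - s)) * (P s / (2 * α)))
    (hP' : ∀ t ∈ Icc 0 T, D t - C₀ - C₁ * P' t = -c' * ω ^ 2 * cosh (ω * t) + P' t / (2 * α) +
      ∫ s in 0..t, ω * sinh (ω * (t - s)) * (P' s / (2 * α))) :
    ∀ t ∈ Icc 0 T, (C₁ + 1 / (2 * α)) * (P t - P' t) = (c - c') * ω ^ 2 * cosh (ω * t) -
      ω / (2 * α) * ∫ s in 0..t, sinh (ω * (t - s)) * (P s - P' s) := by
  intro t ht
  have hint : ∀ Φ : ℝ → ℝ, ContinuousOn Φ (Icc 0 T) →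
      IntervalIntegrable (fun s => ω * sinh (ω * (t - s)) * (Φ s / (2 * α))) volume 0 t :=
    fun Φ hΦ => ((Continuous.continuousOn (by fun_prop)).mul
      ((hΦ.mono (Icc_subset_Icc le_rfl ht.2)).div_const _)).intervalIntegrable_of_Icc ht.1
  have hsub : (∫ s in 0..t, ω * sinh (ω * (t - s)) * (P s / (2 * α))) -
      (∫ s in 0..t, ω * sinh (ω * (t - s)) * (P' s / (2 * α))) =
      ω / (2 * α) * ∫ s in 0..t, sinh (ω * (t - s)) * (P s - P' s) := by
    rw [← integral_sub (hint P hPc) (hint P' hP'c), ← intervalIntegral.integral_const_mul]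
    congr 1 with s
    ring
  linear_combination hP' t ht - hP t ht - hsub

noncomputable def c₁Formula (α β γ ω T : ℝ) (Φ : ℝ → ℝ) : ℝ :=
  (γ * (∫ s in (0:ℝ)..T, cosh (ω * (T - s)) * (Φ s / (2 * α))) +
      β * ∫ s in (0:ℝ)..T, (sinh (ω * (T - s)) / ω) * (Φ s / (2 * α))) /
    (γ * ω * sinh (ω * T) + β * cosh (ω * T))

theorem c₁Formula_sub_eq_mul {α β γ ω T k : ℝ} {Φ Ψ g : ℝ → ℝ} (hT : 0 ≤ T)
    (hΦ : ContinuousOn Φ (Icc 0 T)) (hΨ : ContinuousOn Ψ (Icc 0 T))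
    (h : EqOn (fun s => Φ s - Ψ s) (fun s => k * g s) (Icc 0 T)) :
    c₁Formula α β γ ω T Φ - c₁Formula α β γ ω T Ψ = k * c₁Formula α β γ ω T g := by
  have hL : ∀ K : ℝ → ℝ, Continuous K →
      (∫ s in 0..T, K s * (Φ s / (2 * α))) - (∫ s in 0..T, K s * (Ψ s / (2 * α))) =
        k * ∫ s in 0..T, K s * (g s / (2 * α)) := by
    intro K hK
    have hint : ∀ φ : ℝ → ℝ, ContinuousOn φ (Icc 0 T) →
        IntervalIntegrable (fun s => K s * (φ s / (2 * α))) volume 0 T :=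
      fun φ hφ => (hK.continuousOn.mul (hφ.div_const _)).intervalIntegrable_of_Icc hT
    rw [← integral_sub (hint Φ hΦ) (hint Ψ hΨ), ← intervalIntegral.integral_const_mul]
    refine integral_congr fun s hs => ?_
    have hs' : Φ s - Ψ s = k * g s := h (by rwa [uIcc_of_le hT] at hs)
    linear_combination K s / (2 * α) * hs'
  simp only [c₁Formula]
  linear_combination (γ * hL (fun s => cosh (ω * (T - s))) (by fun_prop) +
    β * hL (fun s => sinh (ω * (T - s)) / ω) (by fun_prop)) /
      (γ * ω * sinh (ω * T) + β * cosh (ω * T))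

theorem mul_c₁Formula_cosh {α β γ ω ω' a T B B' : ℝ} (hω : ω ≠ 0) (hω' : ω' ≠ 0)
    (hsep : ω ^ 2 ≠ ω' ^ 2)
    (hB : B = ω ^ 3 / (ω' * a) * ∫ s in 0..T, cosh (ω * s) * sinh (ω' * (T - s)))
    (hB' : B' = ω ^ 3 / a * ∫ s in 0..T, cosh (ω * s) * cosh (ω' * (T - s))) :
    ω ^ 2 / a * c₁Formula α β γ ω T (fun s => cosh (ω' * s)) =
      (γ * B' + β * B) / (2 * α * ω * (γ * ω * sinh (ω * T) + β * cosh (ω * T))) := by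
  have hcc : ∫ s in 0..T, cosh (ω * (T - s)) * (cosh (ω' * s) / (2 * α)) =
      (∫ s in 0..T, cosh (ω * (T - s)) * cosh (ω' * s)) / (2 * α) := by
    rw [← intervalIntegral.integral_div]
    congr 1 with s
    ring
  have hsc : ∫ s in 0..T, sinh (ω * (T - s)) / ω * (cosh (ω' * s) / (2 * α)) =
      (∫ s in 0..T, sinh (ω * (T - s)) * cosh (ω' * s)) / (2 * α * ω) := by
    rw [← intervalIntegral.integral_div]
    congr 1 with s
    ring
  have hswap : ∫ s in 0..T, cosh (ω * s) * sinh (ω' * (T - s)) =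
      ω' * (∫ s in 0..T, sinh (ω * (T - s)) * cosh (ω' * s)) / ω := by
    rw [integral_congr fun s _ => mul_comm _ _, mul_integral_sinh_mul_cosh_comm T hsep,
      mul_div_cancel_left₀ _ hω]
  rw [hB, hB', hswap, ← integral_cosh_mul_cosh_comm, c₁Formula, hcc, hsc]
  -- keeps `field_simp` from rewriting inside the integrands
  generalize (∫ s in 0..T, cosh (ω * (T - s)) * cosh (ω' * s)) = I₁
  generalize (∫ s in 0..T, sinh (ω * (T - s)) * cosh (ω' * s)) = I₂
  field_simp

theorem sq_sub_sq_eq_of_eq_mul_sqrt {α C₁ ω ω' : ℝ} (hα : 0 < α) (hC₁ : 0 < C₁)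
    (hω' : ω' = ω * √(C₁ / (C₁ + 1 / (2 * α)))) :
    ω / (2 * α * (C₁ + 1 / (2 * α))) * ω = ω ^ 2 - ω' ^ 2 := by
  rw [hω', mul_pow, sq_sqrt (by positivity)]
  field_simp
  ring

theorem eq_zero_of_eq_mul_div {x X Z : ℝ} (h : x = x * (X / Z)) (hXZ : Z - X ≠ 0) : x = 0 := by
  by_contra hx
  have h1 : X / Z = 1 := (mul_left_cancel₀ hx (by rw [mul_one, ← h])).symm
  have hZ : Z ≠ 0 := fun hZ => by simp [hZ] at h1
  exact hXZ (by rw [(div_eq_one_iff_eq hZ).1 h1, sub_self])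

theorem stmt_15_general (α β γ T : ℝ) (hα : 0 < α) (hβ : 0 < β)
    (ω : ℝ) (hω : ω = Real.sqrt (β / α))
    (c₁ : (ℝ → ℝ) → ℝ)
    (hc₁ : ∀ Φ : ℝ → ℝ, c₁ Φ =
      (γ * (∫ s in (0:ℝ)..T, Real.cosh (ω * (T - s)) * (Φ s / (2 * α))) +
        β * ∫ s in (0:ℝ)..T, (Real.sinh (ω * (T - s)) / ω) * (Φ s / (2 * α))) /
      (γ * ω * Real.sinh (ω * T) + β * Real.cosh (ω * T)))
    (C₀ C₁ : ℝ) (hC₁ : 0 < C₁)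
    (D : ℝ → ℝ)
    (ω' : ℝ) (hω' : ω' = ω * Real.sqrt (C₁ / (C₁ + 1 / (2 * α))))
    (B B' : ℝ)
    (hB : B = (ω ^ 3 / (ω' * (C₁ + 1 / (2 * α)))) *
      ∫ s in (0:ℝ)..T, Real.cosh (ω * s) * Real.sinh (ω' * (T - s)))
    (hB' : B' = (ω ^ 3 / (C₁ + 1 / (2 * α))) *
      ∫ s in (0:ℝ)..T, Real.cosh (ω * s) * Real.cosh (ω' * (T - s)))
    (hden : 2 * α * ω * (γ * ω * Real.sinh (ω * T) + β * Real.cosh (ω * T))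
      - γ * B' - β * B ≠ 0)
    (P Ptil : ℝ → ℝ) (hPc : ContinuousOn P (Set.Icc 0 T)) (hPtilc : ContinuousOn Ptil (Set.Icc 0 T))
    (hP : ∀ t ∈ Set.Icc (0 : ℝ) T,
      D t - C₀ - C₁ * P t = -(c₁ P) * ω ^ 2 * Real.cosh (ω * t) + P t / (2 * α) +
        ∫ s in (0:ℝ)..t, ω * Real.sinh (ω * (t - s)) * (P s / (2 * α)))
    (hPtil : ∀ t ∈ Set.Icc (0 : ℝ) T,
      D t - C₀ - C₁ * Ptil t = -(c₁ Ptil) * ω ^ 2 * Real.cosh (ω * t) + Ptil t / (2 * α) +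
        ∫ s in (0:ℝ)..t, ω * Real.sinh (ω * (t - s)) * (Ptil s / (2 * α))) :
    ∀ t ∈ Set.Icc (0 : ℝ) T, P t = Ptil t := by
  intro t ht
  have hω0 : 0 < ω := hω ▸ sqrt_pos.2 (div_pos hβ hα)
  have hω'0 : 0 < ω' := hω' ▸ mul_pos hω0 (sqrt_pos.2 (by positivity))
  have hgap := sq_sub_sq_eq_of_eq_mul_sqrt hα hC₁ hω'
  have hsep : ω ^ 2 ≠ ω' ^ 2 := by
    rw [← sub_ne_zero, ← hgap]
    positivity
  set a := C₁ + 1 / (2 * α) with ha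
  set κ := c₁ P - c₁ Ptil
  have hQ : EqOn (fun t => P t - Ptil t) (fun t => κ * ω ^ 2 / a * cosh (ω' * t)) (Icc 0 T) := by
    refine eqOn_mul_cosh_of_volterra_sinh hω0.ne' hgap (hPc.sub hPtilc) fun x hx => ?_
    have hdiff := sub_eq_volterra_of_equilibrium hPc hPtilc hP hPtil x hx
    rw [← ha] at hdiff
    have ha0 : 0 < a := by positivity
    linear_combination (norm := (field_simp; ring)) hdiff / a
  have hκ : κ = κ * ((γ * B' + β * B) /
      (2 * α * ω * (γ * ω * sinh (ω * T) + β * cosh (ω * T)))) := by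
    have hc : ∀ Φ, c₁ Φ = c₁Formula α β γ ω T Φ := hc₁
    rw [← mul_c₁Formula_cosh hω0.ne' hω'0.ne' hsep hB hB', ← mul_assoc,
      ← mul_div_assoc, ← c₁Formula_sub_eq_mul (ht.1.trans ht.2) hPc hPtilc hQ, ← hc, ← hc]
  have hκ0 : κ = 0 := eq_zero_of_eq_mul_div hκ (by rwa [← sub_sub])
  simpa [hκ0, sub_eq_zero] using hQ ht

/-- (Theorem 3.1, uniqueness) If `P` and `Ptil` are two continuous functions on `[0,T]` both
satisfying the equilibrium equation, and the denominator
`2αω·(γ·ω·sinh(ωT) + β·cosh(ωT)) − γ·B′ − β·B` is nonzero, then `P = Ptil` on `[0,T]`. -/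
theorem stmt_15 (α β γ T : ℝ) (hα : 0 < α) (hβ : 0 < β) (hγ : 0 < γ) (hT : 0 < T)
    (ω : ℝ) (hω : ω = Real.sqrt (β / α))
    (c₁ : (ℝ → ℝ) → ℝ)
    (hc₁ : ∀ Φ : ℝ → ℝ, c₁ Φ =
      (γ * (∫ s in (0:ℝ)..T, Real.cosh (ω * (T - s)) * (Φ s / (2 * α))) +
        β * ∫ s in (0:ℝ)..T, (Real.sinh (ω * (T - s)) / ω) * (Φ s / (2 * α))) /
      (γ * ω * Real.sinh (ω * T) + β * Real.cosh (ω * T)))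
    (C₀ C₁ : ℝ) (hC₁ : 0 < C₁)
    (D : ℝ → ℝ) (hD : ContinuousOn D (Set.Icc 0 T))
    (ω' : ℝ) (hω' : ω' = ω * Real.sqrt (C₁ / (C₁ + 1 / (2 * α))))
    (B B' : ℝ)
    (hB : B = (ω ^ 3 / (ω' * (C₁ + 1 / (2 * α)))) *
      ∫ s in (0:ℝ)..T, Real.cosh (ω * s) * Real.sinh (ω' * (T - s)))
    (hB' : B' = (ω ^ 3 / (C₁ + 1 / (2 * α))) *
      ∫ s in (0:ℝ)..T, Real.cosh (ω * s) * Real.cosh (ω' * (T - s)))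
    (hden : 2 * α * ω * (γ * ω * Real.sinh (ω * T) + β * Real.cosh (ω * T))
      - γ * B' - β * B ≠ 0)
    (P Ptil : ℝ → ℝ) (hPc : ContinuousOn P (Set.Icc 0 T)) (hPtilc : ContinuousOn Ptil (Set.Icc 0 T))
    (hP : ∀ t ∈ Set.Icc (0 : ℝ) T,
      D t - C₀ - C₁ * P t = -(c₁ P) * ω ^ 2 * Real.cosh (ω * t) + P t / (2 * α) +
        ∫ s in (0:ℝ)..t, ω * Real.sinh (ω * (t - s)) * (P s / (2 * α)))
    (hPtil : ∀ t ∈ Set.Icc (0 : ℝ) T,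
      D t - C₀ - C₁ * Ptil t = -(c₁ Ptil) * ω ^ 2 * Real.cosh (ω * t) + Ptil t / (2 * α) +
        ∫ s in (0:ℝ)..t, ω * Real.sinh (ω * (t - s)) * (Ptil s / (2 * α))) :
    ∀ t ∈ Set.Icc (0 : ℝ) T, P t = Ptil t :=
  stmt_15_general α β γ T hα hβ ω hω c₁ hc₁ C₀ C₁ hC₁ D ω' hω' B B' hB hB' hden P Ptil hPc hPtilc hP
    hPtil
end

section
/- (from the proof of Proposition 3.2) With parameters (α/p, β/p, γ/p) in place of (α, β, γ), the coefficient c̃₁^p = ( (γ/p)·A′^p + (β/p)·A^p )/( 2·(α/p)·ω·( (γ/p)·ω·sinh(ωT) + (β/p)·cosh(ωT) ) − (γ/p)·B′^p − (β/p)·B^p ) satisfies lim_{p → 0⁺} c̃₁^p = 0, where A^p, B^p, A′^p, B′^p are defined as A, B, A′, B′ but with ω̃ replaced by ω̃^p = ω·√(C₁/(C₁ + p/(2α))), and 1/(2α) replaced by p/(2α). -/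
lemma aux_cosh_le {x y : ℝ} (h : |x| ≤ y) : Real.cosh x ≤ Real.cosh y := by
  have hy : 0 ≤ y := (abs_nonneg x).trans h
  exact Real.cosh_le_cosh.mpr (by rwa [abs_of_nonneg hy])

lemma aux_sinh_le {x y : ℝ} (h : |x| ≤ y) : |Real.sinh x| ≤ Real.cosh y := by
  rw [Real.abs_sinh]
  exact (Real.sinh_lt_cosh _).le.trans ((Real.cosh_abs x).le.trans (aux_cosh_le h))

/-- (from the proof of Proposition 3.2) With parameters `(α/p, β/p, γ/p)`, the coefficient
`c̃₁^p = ((γ/p)·A′^p + (β/p)·A^p)/(2(α/p)ω·((γ/p)ω·sinh(ωT) + (β/p)·cosh(ωT)) − (γ/p)·B′^p − (β/p)·B^p)`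
satisfies `lim_{p→0⁺} c̃₁^p = 0`. -/
theorem stmt_16 (α β γ T : ℝ) (hα : 0 < α) (hβ : 0 < β) (hγ : 0 < γ) (hT : 0 < T)
    (ω : ℝ) (hω : ω = Real.sqrt (β / α))
    (C₀ C₁ : ℝ) (hC₁ : 0 < C₁)
    (D : ℝ → ℝ) (hD : ContinuousOn D (Set.Icc 0 T))
    (ωhat : ℝ → ℝ) (hωhat : ∀ p, ωhat p = ω * Real.sqrt (C₁ / (C₁ + p / (2 * α))))
    (A B A' B' : ℝ → ℝ)
    (hA : ∀ p, A p = (ω / (ωhat p * (C₁ + p / (2 * α)))) *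
      ∫ s in (0:ℝ)..T, (D s - C₀) * Real.sinh (ωhat p * (T - s)))
    (hB : ∀ p, B p = (ω ^ 3 / (ωhat p * (C₁ + p / (2 * α)))) *
      ∫ s in (0:ℝ)..T, Real.cosh (ω * s) * Real.sinh (ωhat p * (T - s)))
    (hA' : ∀ p, A' p = (ω / (C₁ + p / (2 * α))) *
      ∫ s in (0:ℝ)..T, (D s - C₀) * Real.cosh (ωhat p * (T - s)))
    (hB' : ∀ p, B' p = (ω ^ 3 / (C₁ + p / (2 * α))) *
      ∫ s in (0:ℝ)..T, Real.cosh (ω * s) * Real.cosh (ωhat p * (T - s)))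
    (hden : ∀ p > 0,
      2 * (α / p) * ω * ((γ / p) * ω * Real.sinh (ω * T) + (β / p) * Real.cosh (ω * T))
        - (γ / p) * B' p - (β / p) * B p ≠ 0)
    (c : ℝ → ℝ)
    (hc : ∀ p, c p = ((γ / p) * A' p + (β / p) * A p) /
      (2 * (α / p) * ω * ((γ / p) * ω * Real.sinh (ω * T) + (β / p) * Real.cosh (ω * T))
        - (γ / p) * B' p - (β / p) * B p)) :
    Filter.Tendsto c (nhdsWithin 0 (Set.Ioi 0)) (nhds 0) := by
  have hωpos : 0 < ω := by rw [hω]; exact Real.sqrt_pos.mpr (div_pos hβ hα)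
  obtain ⟨M, hM⟩ : ∃ M, ∀ x ∈ Set.Icc (0:ℝ) T, |D x - C₀| ≤ M := by
    obtain ⟨M, hM⟩ := isCompact_Icc.exists_bound_of_continuousOn (hD.sub continuousOn_const)
    exact ⟨M, fun x hx => by simpa using hM x hx⟩
  have hM0 : 0 ≤ M := (abs_nonneg _).trans (hM 0 ⟨le_rfl, hT.le⟩)
  set ω₀ := ω * Real.sqrt (C₁ / (C₁ + 1 / (2 * α))) with hω₀
  have hω₀pos : 0 < ω₀ := mul_pos hωpos (Real.sqrt_pos.mpr (div_pos hC₁ (by positivity)))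
  -- bounds on ωhat for p ∈ Ioc 0 1
  have hhat : ∀ p ∈ Set.Ioc (0:ℝ) 1, ω₀ ≤ ωhat p ∧ ωhat p ≤ ω := by
    intro p hp
    have hp0 : 0 < p := hp.1
    have hden1 : (0:ℝ) < C₁ + p / (2 * α) := by positivity
    constructor
    · rw [hωhat, hω₀]
      have hs : Real.sqrt (C₁ / (C₁ + 1 / (2 * α))) ≤ Real.sqrt (C₁ / (C₁ + p / (2 * α))) := by
        gcongr
        exact hp.2
      exact mul_le_mul_of_nonneg_left hs hωpos.le
    · rw [hωhat]
      have hs : Real.sqrt (C₁ / (C₁ + p / (2 * α))) ≤ 1 := by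
        rw [show (1:ℝ) = Real.sqrt 1 by simp]
        apply Real.sqrt_le_sqrt
        rw [div_le_one hden1]
        have : 0 < p / (2 * α) := by positivity
        linarith
      calc ω * Real.sqrt (C₁ / (C₁ + p / (2 * α))) ≤ ω * 1 :=
            mul_le_mul_of_nonneg_left hs hωpos.le
        _ = ω := mul_one ω
  set E := Real.cosh (ω * T) with hE
  have hEpos : 0 < E := Real.cosh_pos _
  set KA := ω / (ω₀ * C₁) * (M * E * T) with hKA
  set KB := ω ^ 3 / (ω₀ * C₁) * (E * E * T) with hKB
  set KA' := ω / C₁ * (M * E * T) with hKA'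
  set KB' := ω ^ 3 / C₁ * (E * E * T) with hKB'
  have key : ∀ p ∈ Set.Ioc (0:ℝ) 1,
      |A p| ≤ KA ∧ |B p| ≤ KB ∧ |A' p| ≤ KA' ∧ |B' p| ≤ KB' := by
    intro p hp
    have hp0 : 0 < p := hp.1
    obtain ⟨hhat1, hhat2⟩ := hhat p hp
    have hhat0 : 0 < ωhat p := hω₀pos.trans_le hhat1
    have hden1 : (0:ℝ) < C₁ + p / (2 * α) := by positivity
    have hC₁le : C₁ ≤ C₁ + p / (2 * α) := by
      have : 0 < p / (2 * α) := by positivity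
      linarith
    have harg : ∀ s ∈ Set.uIoc (0:ℝ) T,
        |ωhat p * (T - s)| ≤ ω * T ∧ |ω * s| ≤ ω * T ∧ s ∈ Set.Icc (0:ℝ) T := by
      intro s hs
      rw [Set.uIoc_of_le hT.le] at hs
      have h1 : 0 ≤ T - s := by linarith [hs.2]
      refine ⟨?_, ?_, ⟨hs.1.le, hs.2⟩⟩
      · rw [abs_of_nonneg (mul_nonneg hhat0.le h1)]
        apply mul_le_mul hhat2 (by linarith [hs.1]) h1 hωpos.le
      · rw [abs_of_nonneg (mul_nonneg hωpos.le hs.1.le)]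
        exact mul_le_mul_of_nonneg_left hs.2 hωpos.le
    have hTabs : |T - 0| = T := by rw [sub_zero, abs_of_pos hT]
    -- the four integral bounds
    have hIA : |∫ s in (0:ℝ)..T, (D s - C₀) * Real.sinh (ωhat p * (T - s))| ≤ M * E * T := by
      have := intervalIntegral.norm_integral_le_of_norm_le_const (C := M * E)
        (f := fun s => (D s - C₀) * Real.sinh (ωhat p * (T - s))) (a := 0) (b := T)
        (fun s hs => by
          obtain ⟨h1, _, h3⟩ := harg s hs
          rw [Real.norm_eq_abs, abs_mul]
          exact mul_le_mul (hM s h3) (aux_sinh_le h1) (abs_nonneg _) hM0)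
      rw [Real.norm_eq_abs, hTabs] at this
      linarith
    have hIB : |∫ s in (0:ℝ)..T, Real.cosh (ω * s) * Real.sinh (ωhat p * (T - s))| ≤ E * E * T := by
      have := intervalIntegral.norm_integral_le_of_norm_le_const (C := E * E)
        (f := fun s => Real.cosh (ω * s) * Real.sinh (ωhat p * (T - s))) (a := 0) (b := T)
        (fun s hs => by
          obtain ⟨h1, h2, _⟩ := harg s hs
          rw [Real.norm_eq_abs, abs_mul, abs_of_pos (Real.cosh_pos (ω * s))]
          exact mul_le_mul (aux_cosh_le h2) (aux_sinh_le h1) (abs_nonneg _) hEpos.le)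
      rw [Real.norm_eq_abs, hTabs] at this
      linarith
    have hIA' : |∫ s in (0:ℝ)..T, (D s - C₀) * Real.cosh (ωhat p * (T - s))| ≤ M * E * T := by
      have := intervalIntegral.norm_integral_le_of_norm_le_const (C := M * E)
        (f := fun s => (D s - C₀) * Real.cosh (ωhat p * (T - s))) (a := 0) (b := T)
        (fun s hs => by
          obtain ⟨h1, _, h3⟩ := harg s hs
          rw [Real.norm_eq_abs, abs_mul, abs_of_pos (Real.cosh_pos (ωhat p * (T - s)))]
          exact mul_le_mul (hM s h3) (aux_cosh_le h1) (Real.cosh_pos _).le hM0)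
      rw [Real.norm_eq_abs, hTabs] at this
      linarith
    have hIB' : |∫ s in (0:ℝ)..T, Real.cosh (ω * s) * Real.cosh (ωhat p * (T - s))| ≤ E * E * T := by
      have := intervalIntegral.norm_integral_le_of_norm_le_const (C := E * E)
        (f := fun s => Real.cosh (ω * s) * Real.cosh (ωhat p * (T - s))) (a := 0) (b := T)
        (fun s hs => by
          obtain ⟨h1, h2, _⟩ := harg s hs
          rw [Real.norm_eq_abs, abs_mul, abs_of_pos (Real.cosh_pos (ω * s)),
            abs_of_pos (Real.cosh_pos (ωhat p * (T - s)))]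
          exact mul_le_mul (aux_cosh_le h2) (aux_cosh_le h1) (Real.cosh_pos _).le hEpos.le)
      rw [Real.norm_eq_abs, hTabs] at this
      linarith
    have hIAnn : (0:ℝ) ≤ M * E * T := by positivity
    have hIEnn : (0:ℝ) ≤ E * E * T := by positivity
    have hpre1 : |ω / (ωhat p * (C₁ + p / (2 * α)))| ≤ ω / (ω₀ * C₁) := by
      rw [abs_of_pos (div_pos hωpos (mul_pos hhat0 hden1))]
      gcongr
    have hpre2 : |ω ^ 3 / (ωhat p * (C₁ + p / (2 * α)))| ≤ ω ^ 3 / (ω₀ * C₁) := by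
      rw [abs_of_pos (div_pos (by positivity) (mul_pos hhat0 hden1))]
      gcongr
    have hpre3 : |ω / (C₁ + p / (2 * α))| ≤ ω / C₁ := by
      rw [abs_of_pos (div_pos hωpos hden1)]
      gcongr
    have hpre4 : |ω ^ 3 / (C₁ + p / (2 * α))| ≤ ω ^ 3 / C₁ := by
      rw [abs_of_pos (div_pos (by positivity) hden1)]
      gcongr
    refine ⟨?_, ?_, ?_, ?_⟩
    · rw [hA, abs_mul, hKA]
      exact mul_le_mul hpre1 hIA (abs_nonneg _)
        (div_pos hωpos (mul_pos hω₀pos hC₁)).le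
    · rw [hB, abs_mul, hKB]
      exact mul_le_mul hpre2 hIB (abs_nonneg _)
        (div_pos (by positivity) (mul_pos hω₀pos hC₁)).le
    · rw [hA', abs_mul, hKA']
      exact mul_le_mul hpre3 hIA' (abs_nonneg _) (div_pos hωpos hC₁).le
    · rw [hB', abs_mul, hKB']
      exact mul_le_mul hpre4 hIB' (abs_nonneg _) (div_pos (by positivity) hC₁).le
  have hKAnn : 0 ≤ KA := by
    have := (abs_nonneg (A 1)).trans (key 1 ⟨one_pos, le_rfl⟩).1
    exact this
  have hKBnn : 0 ≤ KB := (abs_nonneg (B 1)).trans (key 1 ⟨one_pos, le_rfl⟩).2.1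
  have hKA'nn : 0 ≤ KA' := (abs_nonneg (A' 1)).trans (key 1 ⟨one_pos, le_rfl⟩).2.2.1
  have hKB'nn : 0 ≤ KB' := (abs_nonneg (B' 1)).trans (key 1 ⟨one_pos, le_rfl⟩).2.2.2
  -- limiting denominator
  set L := 2 * α * ω * (γ * ω * Real.sinh (ω * T) + β * Real.cosh (ω * T)) with hL
  have hLpos : 0 < L := by
    have h1 : 0 < Real.sinh (ω * T) := Real.sinh_pos_iff.mpr (by positivity)
    have h2 : 0 < Real.cosh (ω * T) := Real.cosh_pos _
    positivity
  set f : ℝ → ℝ := fun p => p * (γ * A' p + β * A p) with hf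
  set g : ℝ → ℝ := fun p => L - p * γ * B' p - p * β * B p with hg
  have hmem : Set.Ioc (0:ℝ) 1 ∈ nhdsWithin (0:ℝ) (Set.Ioi 0) :=
    Ioc_mem_nhdsGT_of_mem ⟨le_rfl, one_pos⟩
  have hid : Filter.Tendsto (fun p : ℝ => p) (nhdsWithin 0 (Set.Ioi 0)) (nhds 0) :=
    Filter.tendsto_id.mono_left nhdsWithin_le_nhds
  -- f → 0
  have hftend : Filter.Tendsto f (nhdsWithin 0 (Set.Ioi 0)) (nhds 0) := by
    apply squeeze_zero_norm' (a := fun p => p * (γ * KA' + β * KA))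
    · filter_upwards [hmem] with p hp
      rw [Real.norm_eq_abs, hf, abs_mul, abs_of_pos hp.1]
      apply mul_le_mul_of_nonneg_left _ hp.1.le
      calc |γ * A' p + β * A p| ≤ |γ * A' p| + |β * A p| := abs_add_le _ _
        _ ≤ γ * KA' + β * KA := by
            rw [abs_mul, abs_mul, abs_of_pos hγ, abs_of_pos hβ]
            exact add_le_add (mul_le_mul_of_nonneg_left (key p hp).2.2.1 hγ.le)
              (mul_le_mul_of_nonneg_left (key p hp).1 hβ.le)
    · simpa using hid.mul_const (γ * KA' + β * KA)
  -- g → L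
  have hgtend : Filter.Tendsto g (nhdsWithin 0 (Set.Ioi 0)) (nhds L) := by
    have h1 : Filter.Tendsto (fun p => p * γ * B' p) (nhdsWithin 0 (Set.Ioi 0)) (nhds 0) := by
      apply squeeze_zero_norm' (a := fun p => p * (γ * KB'))
      · filter_upwards [hmem] with p hp
        rw [Real.norm_eq_abs, abs_mul, abs_mul, abs_of_pos hp.1, abs_of_pos hγ, mul_assoc]
        exact mul_le_mul_of_nonneg_left
          (mul_le_mul_of_nonneg_left (key p hp).2.2.2 hγ.le) hp.1.le
      · simpa using hid.mul_const (γ * KB')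
    have h2 : Filter.Tendsto (fun p => p * β * B p) (nhdsWithin 0 (Set.Ioi 0)) (nhds 0) := by
      apply squeeze_zero_norm' (a := fun p => p * (β * KB))
      · filter_upwards [hmem] with p hp
        rw [Real.norm_eq_abs, abs_mul, abs_mul, abs_of_pos hp.1, abs_of_pos hβ, mul_assoc]
        exact mul_le_mul_of_nonneg_left
          (mul_le_mul_of_nonneg_left (key p hp).2.1 hβ.le) hp.1.le
      · simpa using hid.mul_const (β * KB)
    have := (tendsto_const_nhds (x := L) (f := nhdsWithin (0:ℝ) (Set.Ioi 0))).sub h1 |>.sub h2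
    simpa using this
  -- c = f / g on Ioi 0
  have hceq : c =ᶠ[nhdsWithin (0:ℝ) (Set.Ioi 0)] fun p => f p / g p := by
    filter_upwards [self_mem_nhdsWithin] with p hp
    have hp0 : (0:ℝ) < p := hp
    have hpne : p ≠ 0 := hp0.ne'
    rw [hc]
    have h1 : f p = p ^ 2 * ((γ / p) * A' p + (β / p) * A p) := by
      rw [hf]; field_simp
    have h2 : g p = p ^ 2 *
        (2 * (α / p) * ω * ((γ / p) * ω * Real.sinh (ω * T) + (β / p) * Real.cosh (ω * T))
          - (γ / p) * B' p - (β / p) * B p) := by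
      rw [hg, hL]; field_simp
    rw [h1, h2, mul_div_mul_left _ _ (pow_ne_zero 2 hpne)]
  have : Filter.Tendsto (fun p => f p / g p) (nhdsWithin 0 (Set.Ioi 0)) (nhds (0 / L)) :=
    hftend.div hgtend hLpos.ne'
  rw [zero_div] at this
  exact this.congr' hceq.symm
end

section
/- (Proposition 3.2, part 1) Let P^p(t) denote the equilibrium price of Theorem 3.1 computed with storage parameters (α/p, β/p, γ/p), i.e. P^p(t) = ( D(t) − C₀ − (ω·p/(2α))·X^p(t) + c̃₁^p·ω²·cosh(ωt) )/( C₁ + p/(2α) ), where c̃₁^p and X^p are the quantities c̃₁ and X of Theorem 3.1 computed with ω̃ replaced by ω̃^p = ω·√(C₁/(C₁ + p/(2α))) and 1/(2α) replaced by p/(2α). Then for every t ∈ [0, T], lim_{p → 0⁺} P^p(t) = (D(t) − C₀)/C₁. -/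
/-- (Proposition 3.2, part 1) Let `P^p(t)` denote the equilibrium price of Theorem 3.1
computed with storage parameters `(α/p, β/p, γ/p)`. Then, for every `t ∈ [0, T]`,
`lim_{p→0⁺} P^p(t) = (D(t) − C₀)/C₁`. -/
theorem stmt_17 (α β γ T : ℝ) (hα : 0 < α) (hβ : 0 < β) (hγ : 0 < γ) (hT : 0 < T)
    (ω : ℝ) (hω : ω = Real.sqrt (β / α))
    (C₀ C₁ : ℝ) (hC₁ : 0 < C₁)
    (D : ℝ → ℝ) (hD : ContinuousOn D (Set.Icc 0 T))
    (ωhat : ℝ → ℝ) (hωhat : ∀ p, ωhat p = ω * Real.sqrt (C₁ / (C₁ + p / (2 * α))))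
    (A B A' B' : ℝ → ℝ)
    (hA : ∀ p, A p = (ω / (ωhat p * (C₁ + p / (2 * α)))) *
      ∫ s in (0:ℝ)..T, (D s - C₀) * Real.sinh (ωhat p * (T - s)))
    (hB : ∀ p, B p = (ω ^ 3 / (ωhat p * (C₁ + p / (2 * α)))) *
      ∫ s in (0:ℝ)..T, Real.cosh (ω * s) * Real.sinh (ωhat p * (T - s)))
    (hA' : ∀ p, A' p = (ω / (C₁ + p / (2 * α))) *
      ∫ s in (0:ℝ)..T, (D s - C₀) * Real.cosh (ωhat p * (T - s)))
    (hB' : ∀ p, B' p = (ω ^ 3 / (C₁ + p / (2 * α))) *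
      ∫ s in (0:ℝ)..T, Real.cosh (ω * s) * Real.cosh (ωhat p * (T - s)))
    (hden : ∀ p > 0,
      2 * (α / p) * ω * ((γ / p) * ω * Real.sinh (ω * T) + (β / p) * Real.cosh (ω * T))
        - (γ / p) * B' p - (β / p) * B p ≠ 0)
    (c : ℝ → ℝ)
    (hc : ∀ p, c p = ((γ / p) * A' p + (β / p) * A p) /
      (2 * (α / p) * ω * ((γ / p) * ω * Real.sinh (ω * T) + (β / p) * Real.cosh (ω * T))
        - (γ / p) * B' p - (β / p) * B p))
    (X : ℝ → ℝ → ℝ)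
    (hX : ∀ p t, X p t = (ω / (ωhat p * (C₁ + p / (2 * α)))) *
        (∫ s in (0:ℝ)..t, (D s - C₀) * Real.sinh (ωhat p * (t - s))) +
      c p * (ω ^ 3 / (ωhat p * (C₁ + p / (2 * α)))) *
        ∫ s in (0:ℝ)..t, Real.cosh (ω * s) * Real.sinh (ωhat p * (t - s)))
    (P : ℝ → ℝ → ℝ)
    (hP : ∀ p t, P p t =
      (D t - C₀ - (ω * p / (2 * α)) * X p t + c p * ω ^ 2 * Real.cosh (ω * t)) /
        (C₁ + p / (2 * α))) :
    ∀ t ∈ Set.Icc (0 : ℝ) T,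
      Filter.Tendsto (fun p => P p t) (nhdsWithin 0 (Set.Ioi 0))
        (nhds ((D t - C₀) / C₁)) := by
  intro t ht
  obtain ⟨ht0, htT⟩ := ht
  have hωpos : 0 < ω := by rw [hω]; exact Real.sqrt_pos.mpr (div_pos hβ hα)
  obtain ⟨M, hM⟩ := isCompact_Icc.exists_bound_of_continuousOn
    (f := fun s => D s - C₀) (hD.sub continuousOn_const)
  have hM0 : 0 ≤ M := le_trans (norm_nonneg _) (hM 0 ⟨le_refl _, hT.le⟩)
  set Q := Real.cosh (ω * T) with hQdef
  have hQ0 : 0 < Q := Real.cosh_pos _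
  set w0 := ω * Real.sqrt (C₁ / (C₁ + 1 / (2 * α))) with hw0def
  have hw0pos : 0 < w0 := by
    rw [hw0def]
    exact mul_pos hωpos (Real.sqrt_pos.mpr (div_pos hC₁ (by positivity)))
  -- bounds on ωhat on (0,1]
  have hwhat : ∀ p ∈ Set.Ioc (0:ℝ) 1, w0 ≤ ωhat p ∧ ωhat p ≤ ω := by
    intro p hp
    have hp0 : 0 < p := hp.1
    have hpd : 0 < p / (2 * α) := by positivity
    have h1d : (0:ℝ) < 1 / (2 * α) := by positivity
    have hled : p / (2 * α) ≤ 1 / (2 * α) := by gcongr; exact hp.2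
    rw [hωhat, hw0def]
    constructor
    · refine mul_le_mul_of_nonneg_left ?_ hωpos.le
      refine Real.sqrt_le_sqrt ?_
      exact div_le_div_of_nonneg_left hC₁.le (by linarith) (by linarith)
    · have h1 : Real.sqrt (C₁ / (C₁ + p / (2 * α))) ≤ 1 := by
        rw [show (1:ℝ) = Real.sqrt 1 by simp]
        refine Real.sqrt_le_sqrt ?_
        rw [div_le_one (by linarith)]
        linarith
      nlinarith [Real.sqrt_nonneg (C₁ / (C₁ + p / (2 * α)))]
  -- kernel bounds
  have hker : ∀ x : ℝ, |x| ≤ ω * T → |Real.sinh x| ≤ Q ∧ |Real.cosh x| ≤ Q := by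
    intro x hx
    have h1 : Real.cosh x ≤ Q := by
      rw [hQdef, Real.cosh_le_cosh]
      rwa [abs_of_nonneg (by positivity : (0:ℝ) ≤ ω * T)]
    refine ⟨?_, ?_⟩
    · calc |Real.sinh x| = Real.sinh |x| := Real.abs_sinh x
        _ ≤ Real.cosh |x| := (Real.sinh_lt_cosh _).le
        _ = Real.cosh x := Real.cosh_abs x
        _ ≤ Q := h1
    · rwa [abs_of_nonneg (Real.cosh_pos x).le]
  -- generic integral bound
  have key : ∀ (C₂ : ℝ), 0 ≤ C₂ → ∀ (f g : ℝ → ℝ),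
      (∀ s ∈ Set.Icc (0:ℝ) T, |f s| ≤ C₂) → (∀ s ∈ Set.Icc (0:ℝ) T, |g s| ≤ Q) →
      ∀ u ∈ Set.Icc (0:ℝ) T, |∫ s in (0:ℝ)..u, f s * g s| ≤ C₂ * Q * T := by
    intro C₂ hC₂ f g hf hg u hu
    have h1 : |∫ s in (0:ℝ)..u, f s * g s| ≤ C₂ * Q * |u - 0| := by
      rw [← Real.norm_eq_abs]
      apply intervalIntegral.norm_integral_le_of_norm_le_const
      intro x hx
      rw [Set.uIoc_of_le hu.1] at hx
      have hx' : x ∈ Set.Icc (0:ℝ) T := ⟨hx.1.le, hx.2.trans hu.2⟩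
      rw [Real.norm_eq_abs, abs_mul]
      exact mul_le_mul (hf x hx') (hg x hx') (abs_nonneg _) hC₂
    calc |∫ s in (0:ℝ)..u, f s * g s| ≤ C₂ * Q * |u - 0| := h1
      _ ≤ C₂ * Q * T := by
          rw [sub_zero, abs_of_nonneg hu.1]
          exact mul_le_mul_of_nonneg_left hu.2 (by positivity)
  -- bounds for the four integrals
  have hIb : ∀ p ∈ Set.Ioc (0:ℝ) 1, ∀ u ∈ Set.Icc (0:ℝ) T,
      |∫ s in (0:ℝ)..u, (D s - C₀) * Real.sinh (ωhat p * (u - s))| ≤ M * Q * T ∧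
      |∫ s in (0:ℝ)..u, Real.cosh (ω * s) * Real.sinh (ωhat p * (u - s))| ≤ Q * Q * T ∧
      |∫ s in (0:ℝ)..u, (D s - C₀) * Real.cosh (ωhat p * (u - s))| ≤ M * Q * T ∧
      |∫ s in (0:ℝ)..u, Real.cosh (ω * s) * Real.cosh (ωhat p * (u - s))| ≤ Q * Q * T := by
    intro p hp u hu
    obtain ⟨hw1, hw2⟩ := hwhat p hp
    have hwp0 : 0 ≤ ωhat p := (hw0pos.trans_le hw1).le
    have hgb : ∀ s ∈ Set.Icc (0:ℝ) T, |ωhat p * (u - s)| ≤ ω * T := by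
      intro s hs
      rw [abs_mul, abs_of_nonneg hwp0]
      have h2 : |u - s| ≤ T := by
        rw [abs_sub_le_iff]
        constructor <;> [linarith [hu.2, hs.1]; linarith [hs.2, hu.1]]
      exact mul_le_mul hw2 h2 (abs_nonneg _) hωpos.le
    have hf1 : ∀ s ∈ Set.Icc (0:ℝ) T, |D s - C₀| ≤ M := by
      intro s hs
      have := hM s hs
      rwa [Real.norm_eq_abs] at this
    have hf2 : ∀ s ∈ Set.Icc (0:ℝ) T, |Real.cosh (ω * s)| ≤ Q := by
      intro s hs
      refine (hker _ ?_).2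
      rw [abs_of_nonneg (mul_nonneg hωpos.le hs.1)]
      exact mul_le_mul_of_nonneg_left hs.2 hωpos.le
    exact ⟨key M hM0 _ _ hf1 (fun s hs => (hker _ (hgb s hs)).1) u hu,
      key Q hQ0.le _ _ hf2 (fun s hs => (hker _ (hgb s hs)).1) u hu,
      key M hM0 _ _ hf1 (fun s hs => (hker _ (hgb s hs)).2) u hu,
      key Q hQ0.le _ _ hf2 (fun s hs => (hker _ (hgb s hs)).2) u hu⟩
  -- coefficient bounds
  have hcoef : ∀ p ∈ Set.Ioc (0:ℝ) 1,
      0 < ωhat p * (C₁ + p / (2 * α)) ∧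
      ω / (ωhat p * (C₁ + p / (2 * α))) ≤ ω / (w0 * C₁) ∧
      ω ^ 3 / (ωhat p * (C₁ + p / (2 * α))) ≤ ω ^ 3 / (w0 * C₁) ∧
      ω / (C₁ + p / (2 * α)) ≤ ω / C₁ ∧
      ω ^ 3 / (C₁ + p / (2 * α)) ≤ ω ^ 3 / C₁ := by
    intro p hp
    obtain ⟨hw1, _⟩ := hwhat p hp
    have hwp0 : 0 < ωhat p := hw0pos.trans_le hw1
    have hp0 : 0 < p := hp.1
    have hpd : 0 < p / (2 * α) := by positivity
    have hC1p : C₁ ≤ C₁ + p / (2 * α) := by linarith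
    have h1 : w0 * C₁ ≤ ωhat p * (C₁ + p / (2 * α)) :=
      mul_le_mul hw1 hC1p hC₁.le hwp0.le
    have h2 : 0 < w0 * C₁ := mul_pos hw0pos hC₁
    refine ⟨h2.trans_le h1, ?_, ?_, ?_, ?_⟩
    · exact div_le_div_of_nonneg_left hωpos.le h2 h1
    · exact div_le_div_of_nonneg_left (by positivity) h2 h1
    · exact div_le_div_of_nonneg_left hωpos.le hC₁ hC1p
    · exact div_le_div_of_nonneg_left (by positivity) hC₁ hC1p
  set KA : ℝ := ω / (w0 * C₁) * (M * Q * T) with hKAdef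
  set KB : ℝ := ω ^ 3 / (w0 * C₁) * (Q * Q * T) with hKBdef
  set KA' : ℝ := ω / C₁ * (M * Q * T) with hKA'def
  set KB' : ℝ := ω ^ 3 / C₁ * (Q * Q * T) with hKB'def
  have hKA0 : 0 ≤ KA := by rw [hKAdef]; positivity
  have hKB0 : 0 ≤ KB := by rw [hKBdef]; positivity
  have hKA'0 : 0 ≤ KA' := by rw [hKA'def]; positivity
  have hKB'0 : 0 ≤ KB' := by rw [hKB'def]; positivity
  have hTmem : T ∈ Set.Icc (0:ℝ) T := ⟨hT.le, le_refl T⟩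
  have habs : ∀ p ∈ Set.Ioc (0:ℝ) 1,
      |A p| ≤ KA ∧ |B p| ≤ KB ∧ |A' p| ≤ KA' ∧ |B' p| ≤ KB' := by
    intro p hp
    obtain ⟨hpos, hc1, hc2, hc3, hc4⟩ := hcoef p hp
    obtain ⟨hi1, hi2, hi3, hi4⟩ := hIb p hp T hTmem
    have hp0 : 0 < p := hp.1
    have hpd : 0 < p / (2 * α) := by positivity
    have hC1p : 0 < C₁ + p / (2 * α) := by linarith
    refine ⟨?_, ?_, ?_, ?_⟩
    · rw [hA, abs_mul, abs_of_pos (div_pos hωpos hpos), hKAdef]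
      exact mul_le_mul hc1 hi1 (abs_nonneg _) (by positivity)
    · rw [hB, abs_mul, abs_of_pos (div_pos (by positivity) hpos), hKBdef]
      exact mul_le_mul hc2 hi2 (abs_nonneg _) (by positivity)
    · rw [hA', abs_mul, abs_of_pos (div_pos hωpos hC1p), hKA'def]
      exact mul_le_mul hc3 hi3 (abs_nonneg _) (by positivity)
    · rw [hB', abs_mul, abs_of_pos (div_pos (by positivity) hC1p), hKB'def]
      exact mul_le_mul hc4 hi4 (abs_nonneg _) (by positivity)
  -- rewrite c p
  set K : ℝ := 2 * α * ω * (γ * ω * Real.sinh (ω * T) + β * Q) with hKdef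
  have hKpos : 0 < K := by
    have hs : 0 < Real.sinh (ω * T) := by
      rw [Real.sinh_pos_iff]; positivity
    rw [hKdef]; positivity
  have hcp : ∀ p > 0, c p = p * (γ * A' p + β * A p) / (K - p * (γ * B' p + β * B p)) := by
    intro p hp
    have hp' : p ≠ 0 := hp.ne'
    have hdeq : 2 * (α / p) * ω * ((γ / p) * ω * Real.sinh (ω * T) + (β / p) * Q)
        - (γ / p) * B' p - (β / p) * B p
        = (K - p * (γ * B' p + β * B p)) / p ^ 2 := by
      rw [hKdef]; field_simp; ring
    have hnz : K - p * (γ * B' p + β * B p) ≠ 0 := by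
      intro h
      exact hden p hp (by rw [hdeq, h, zero_div])
    rw [hc, hdeq, div_div_eq_mul_div]
    rw [div_eq_div_iff hnz hnz]
    field_simp
  set KN : ℝ := γ * KA' + β * KA with hKNdef
  set KM : ℝ := γ * KB' + β * KB with hKMdef
  have hKN0 : 0 ≤ KN := by rw [hKNdef]; positivity
  have hKM0 : 0 ≤ KM := by rw [hKMdef]; positivity
  set δ : ℝ := min 1 (K / (2 * (KM + 1))) with hδdef
  have hδpos : 0 < δ := by
    rw [hδdef]
    exact lt_min one_pos (by positivity)
  have hcbound : ∀ p ∈ Set.Ioc (0:ℝ) δ, |c p| ≤ 2 * KN / K * p := by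
    intro p hp
    have hp0 : 0 < p := hp.1
    have hp1 : p ∈ Set.Ioc (0:ℝ) 1 := ⟨hp.1, hp.2.trans (min_le_left _ _)⟩
    obtain ⟨hA1, hB1, hA'1, hB'1⟩ := habs p hp1
    have hN : |γ * A' p + β * A p| ≤ KN := by
      calc |γ * A' p + β * A p| ≤ |γ * A' p| + |β * A p| := abs_add_le _ _
        _ = γ * |A' p| + β * |A p| := by
            rw [abs_mul, abs_mul, abs_of_pos hγ, abs_of_pos hβ]
        _ ≤ KN := by
            rw [hKNdef]
            exact add_le_add (mul_le_mul_of_nonneg_left hA'1 hγ.le)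
              (mul_le_mul_of_nonneg_left hA1 hβ.le)
    have hMM : |γ * B' p + β * B p| ≤ KM := by
      calc |γ * B' p + β * B p| ≤ |γ * B' p| + |β * B p| := abs_add_le _ _
        _ = γ * |B' p| + β * |B p| := by
            rw [abs_mul, abs_mul, abs_of_pos hγ, abs_of_pos hβ]
        _ ≤ KM := by
            rw [hKMdef]
            exact add_le_add (mul_le_mul_of_nonneg_left hB'1 hγ.le)
              (mul_le_mul_of_nonneg_left hB1 hβ.le)
    have hsmall : |p * (γ * B' p + β * B p)| ≤ K / 2 := by
      rw [abs_mul, abs_of_pos hp.1]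
      have hpδ : p ≤ K / (2 * (KM + 1)) := hp.2.trans (min_le_right _ _)
      calc p * |γ * B' p + β * B p| ≤ (K / (2 * (KM + 1))) * (KM + 1) := by
            exact mul_le_mul hpδ (hMM.trans (by linarith)) (abs_nonneg _) (by positivity)
        _ = K / 2 := by field_simp
    have hdenlb : K / 2 ≤ |K - p * (γ * B' p + β * B p)| := by
      have h1 : p * (γ * B' p + β * B p) ≤ K / 2 :=
        (le_abs_self _).trans hsmall
      calc K / 2 = K - K / 2 := by ring
        _ ≤ K - p * (γ * B' p + β * B p) := by linarith
        _ ≤ |K - p * (γ * B' p + β * B p)| := le_abs_self _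
    rw [hcp p hp.1, abs_div]
    have hnum : |p * (γ * A' p + β * A p)| ≤ p * KN := by
      rw [abs_mul, abs_of_pos hp.1]
      exact mul_le_mul_of_nonneg_left hN hp.1.le
    calc |p * (γ * A' p + β * A p)| / |K - p * (γ * B' p + β * B p)|
        ≤ (p * KN) / (K / 2) :=
          div_le_div₀ (by positivity) hnum (by positivity) hdenlb
      _ = 2 * KN / K * p := by field_simp
  have hmemev : ∀ᶠ p in nhdsWithin (0:ℝ) (Set.Ioi 0), p ∈ Set.Ioc (0:ℝ) δ :=
    Filter.eventually_of_mem (Ioc_mem_nhdsGT_of_mem ⟨le_refl 0, hδpos⟩) (fun _ h => h)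
  have hc0 : Filter.Tendsto c (nhdsWithin (0:ℝ) (Set.Ioi 0)) (nhds 0) := by
    apply squeeze_zero_norm'
      (hmemev.mono fun p hp => by
        simpa [Real.norm_eq_abs] using hcbound p hp)
    have h1 : Filter.Tendsto (fun p : ℝ => 2 * KN / K * p) (nhds 0) (nhds (2 * KN / K * 0)) :=
      (continuous_const.mul continuous_id).tendsto 0
    simpa using h1.mono_left nhdsWithin_le_nhds
  -- bound on X p t
  have htmem : t ∈ Set.Icc (0:ℝ) T := ⟨ht0, htT⟩
  have hXb : ∀ p ∈ Set.Ioc (0:ℝ) 1, |X p t| ≤ KA + |c p| * KB := by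
    intro p hp
    obtain ⟨hpos, hc1, hc2, _, _⟩ := hcoef p hp
    obtain ⟨hi1, hi2, _, _⟩ := hIb p hp t htmem
    rw [hX]
    set I1 := ∫ s in (0:ℝ)..t, (D s - C₀) * Real.sinh (ωhat p * (t - s)) with hI1
    set I2 := ∫ s in (0:ℝ)..t, Real.cosh (ω * s) * Real.sinh (ωhat p * (t - s)) with hI2
    refine (abs_add_le _ _).trans (add_le_add ?_ ?_)
    · rw [abs_mul, abs_of_pos (div_pos hωpos hpos), hKAdef]
      exact mul_le_mul hc1 hi1 (abs_nonneg _) (by positivity)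
    · rw [abs_mul, abs_mul, abs_of_pos (div_pos (by positivity) hpos), mul_assoc, hKBdef]
      refine mul_le_mul_of_nonneg_left ?_ (abs_nonneg _)
      exact mul_le_mul hc2 hi2 (abs_nonneg _) (by positivity)
  have hpX : Filter.Tendsto (fun p => p * X p t) (nhdsWithin (0:ℝ) (Set.Ioi 0)) (nhds 0) := by
    have hb : ∀ᶠ p in nhdsWithin (0:ℝ) (Set.Ioi 0), ‖p * X p t‖ ≤ p * (KA + |c p| * KB) := by
      refine hmemev.mono fun p hp => ?_
      have hp0 : 0 < p := hp.1
      rw [Real.norm_eq_abs, abs_mul, abs_of_pos hp0]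
      exact mul_le_mul_of_nonneg_left
        (hXb p ⟨hp.1, hp.2.trans (min_le_left _ _)⟩) hp0.le
    refine squeeze_zero_norm' hb ?_
    have h1 : Filter.Tendsto (fun p : ℝ => p) (nhdsWithin (0:ℝ) (Set.Ioi 0)) (nhds 0) :=
      Filter.tendsto_id.mono_right nhdsWithin_le_nhds
    have h2 : Filter.Tendsto (fun p => KA + |c p| * KB) (nhdsWithin (0:ℝ) (Set.Ioi 0))
        (nhds (KA + |(0:ℝ)| * KB)) :=
      tendsto_const_nhds.add ((hc0.abs).mul_const KB)
    have := h1.mul h2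
    simpa using this
  -- conclusion
  have hdent : Filter.Tendsto (fun p : ℝ => C₁ + p / (2 * α))
      (nhdsWithin (0:ℝ) (Set.Ioi 0)) (nhds C₁) := by
    have h1 : Filter.Tendsto (fun p : ℝ => C₁ + p / (2 * α)) (nhds 0)
        (nhds (C₁ + 0 / (2 * α))) :=
      (continuous_const.add (continuous_id.div_const _)).tendsto 0
    simpa using h1.mono_left nhdsWithin_le_nhds
  have hnum : Filter.Tendsto
      (fun p => D t - C₀ - (ω * p / (2 * α)) * X p t + c p * ω ^ 2 * Real.cosh (ω * t))
      (nhdsWithin (0:ℝ) (Set.Ioi 0)) (nhds (D t - C₀)) := by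
    have h1 : Filter.Tendsto (fun p => (ω * p / (2 * α)) * X p t)
        (nhdsWithin (0:ℝ) (Set.Ioi 0)) (nhds 0) := by
      have := hpX.const_mul (ω / (2 * α))
      rw [mul_zero] at this
      exact this.congr (fun p => by ring)
    have h2 : Filter.Tendsto (fun p => c p * ω ^ 2 * Real.cosh (ω * t))
        (nhdsWithin (0:ℝ) (Set.Ioi 0)) (nhds 0) := by
      have := (hc0.mul_const (ω ^ 2)).mul_const (Real.cosh (ω * t))
      simpa using this
    have h0 : Filter.Tendsto (fun _ : ℝ => D t - C₀) (nhdsWithin (0:ℝ) (Set.Ioi 0))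
        (nhds (D t - C₀)) := tendsto_const_nhds
    have := (h0.sub h1).add h2
    simpa using this
  have hfinal := hnum.div hdent hC₁.ne'
  exact hfinal.congr (fun p => (hP p t).symm)
end

section
/- (Proposition 3.2, part 2) Assume moreover that D : [0, T] → ℝ is continuously differentiable. Let P^p(t) denote the equilibrium price of Theorem 3.1 computed with storage parameters (α/p, β/p, γ/p), i.e. P^p(t) = ( D(t) − C₀ − (ω·p/(2α))·X^p(t) + c̃₁^p·ω²·cosh(ωt) )/( C₁ + p/(2α) ), where c̃₁^p and X^p are the quantities c̃₁ and X of Theorem 3.1 computed with ω̃ replaced by ω̃^p = ω·√(C₁/(C₁ + p/(2α))) and 1/(2α) replaced by p/(2α). Then the map t ↦ P^p(t) is differentiable and, for every t ∈ [0, T], lim_{p → +∞} (d/dt)P^p(t) = 0. -/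
/-!
Put `K_p = C₁ + p/(2α)`, so that `K_p → ∞` and `ω̂_p → 0` as `p → ∞`. Since
`ω̂⁻¹ sinh (ω̂ u) = ∫₀ᵘ cosh (ω̂ τ) dτ` depends continuously on `ω̂` down to `ω̂ = 0`, the quantities
`p A, p A', p B, p B'` converge, and after multiplying numerator and denominator by `p²` the
coefficient `c̃₁^p` converges too: its rescaled denominator tends to `2αωβ ≠ 0`. Splitting
`sinh (ω̂ (t - s)) = sinh (ω̂ t) cosh (ω̂ s) - cosh (ω̂ t) sinh (ω̂ s)` lets one differentiate `X^p`,
and `(d/dt) P^p(t)` becomes a convergent expression divided by `K_p`, hence tends to `0`.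
-/

open Filter Set Topology Real intervalIntegral

lemma integral_cosh_mul {w : ℝ} (hw : w ≠ 0) (u : ℝ) :
    ∫ τ in (0:ℝ)..u, cosh (w * τ) = sinh (w * u) / w := by
  rw [integral_comp_mul_left (fun x => cosh x) hw,
    integral_eq_sub_of_hasDerivAt (fun x _ => hasDerivAt_sinh x)
      (continuous_cosh.intervalIntegrable _ _)]
  simp [div_eq_inv_mul]

lemma integral_cosh_mul_mul_sub {w : ℝ} (hw : w ≠ 0) (T : ℝ) :
    ∫ s in (0:ℝ)..T, cosh (w * s) * (T - s) = (cosh (w * T) - 1) / w ^ 2 := by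
  have hF : ∀ x ∈ uIcc (0:ℝ) T, HasDerivAt
      (fun s => (T - s) * sinh (w * s) / w + cosh (w * s) / w ^ 2) (cosh (w * x) * (T - x)) x := by
    intro x _
    have hwx : HasDerivAt (w * ·) w x := by simpa using (hasDerivAt_id x).const_mul w
    refine ((((hasDerivAt_id x).const_sub T).mul ((hasDerivAt_sinh _).comp x hwx)).div_const
      w).add (((hasDerivAt_cosh _).comp x hwx).div_const (w ^ 2)) |>.congr_deriv ?_
    simp only [Function.comp_apply, id_eq]
    field_simp
    ring
  rw [integral_eq_sub_of_hasDerivAt hF ((by fun_prop : Continuous _).intervalIntegrable _ _)]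
  field_simp
  simp

lemma integral_mul_sinh_mul_sub {f : ℝ → ℝ} (hf : Continuous f) (w t : ℝ) :
    ∫ s in (0:ℝ)..t, f s * sinh (w * (t - s)) =
      sinh (w * t) * (∫ s in (0:ℝ)..t, f s * cosh (w * s)) -
        cosh (w * t) * ∫ s in (0:ℝ)..t, f s * sinh (w * s) := by
  rw [← integral_const_mul, ← integral_const_mul,
    ← integral_sub ((by fun_prop : Continuous _).intervalIntegrable _ _)
      ((by fun_prop : Continuous _).intervalIntegrable _ _)]
  congr 1 with s
  rw [mul_sub, sinh_sub]
  ring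

lemma integral_mul_cosh_mul_sub {f : ℝ → ℝ} (hf : Continuous f) (w t : ℝ) :
    ∫ s in (0:ℝ)..t, f s * cosh (w * (t - s)) =
      cosh (w * t) * (∫ s in (0:ℝ)..t, f s * cosh (w * s)) -
        sinh (w * t) * ∫ s in (0:ℝ)..t, f s * sinh (w * s) := by
  rw [← integral_const_mul, ← integral_const_mul,
    ← integral_sub ((by fun_prop : Continuous _).intervalIntegrable _ _)
      ((by fun_prop : Continuous _).intervalIntegrable _ _)]
  congr 1 with s
  rw [mul_sub, cosh_sub]
  ring

lemma hasDerivAt_integral_mul_sinh_mul_sub {f : ℝ → ℝ} (hf : Continuous f) (w t : ℝ) :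
    HasDerivAt (fun u => ∫ s in (0:ℝ)..u, f s * sinh (w * (u - s)))
      (w * ∫ s in (0:ℝ)..t, f s * cosh (w * (t - s))) t := by
  have hc : Continuous fun s => f s * cosh (w * s) := by fun_prop
  have hs : Continuous fun s => f s * sinh (w * s) := by fun_prop
  have hwt : HasDerivAt (w * ·) w t := by simpa using (hasDerivAt_id t).const_mul w
  rw [funext (integral_mul_sinh_mul_sub hf w), integral_mul_cosh_mul_sub hf w t]
  refine (((hasDerivAt_sinh _).comp t hwt).mul (hc.integral_hasStrictDerivAt 0 t).hasDerivAt).sub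
    (((hasDerivAt_cosh _).comp t hwt).mul (hs.integral_hasStrictDerivAt 0 t).hasDerivAt)
    |>.congr_deriv ?_
  simp only [Function.comp_apply]
  ring

lemma tendsto_integral_mul_cosh_mul_sub {ι : Type*} {l : Filter ι} {f : ℝ → ℝ} (hf : Continuous f)
    {w : ι → ℝ} (hw : Tendsto w l (𝓝 0)) (t : ℝ) :
    Tendsto (fun p => ∫ s in (0:ℝ)..t, f s * cosh (w p * (t - s))) l
      (𝓝 (∫ s in (0:ℝ)..t, f s)) := by
  have hcont : Continuous fun v => ∫ s in (0:ℝ)..t, f s * cosh (v * (t - s)) := by fun_prop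
  simpa [Function.comp_def] using (hcont.tendsto 0).comp hw

/-- Writing `w⁻¹ sinh (w u) = ∫₀ᵘ cosh (w τ) dτ` makes the dependence on `w` continuous at `0`. -/
lemma tendsto_inv_mul_integral_mul_sinh_mul_sub {ι : Type*} {l : Filter ι} {f : ℝ → ℝ}
    (hf : Continuous f) {w : ι → ℝ} (hw : Tendsto w l (𝓝 0)) (hw0 : ∀ᶠ p in l, w p ≠ 0)
    (t : ℝ) :
    Tendsto (fun p => (w p)⁻¹ * ∫ s in (0:ℝ)..t, f s * sinh (w p * (t - s))) l
      (𝓝 (∫ s in (0:ℝ)..t, f s * (t - s))) := by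
  have hcont : Continuous fun v => ∫ s in (0:ℝ)..t, f s * ∫ τ in (0:ℝ)..(t - s), cosh (v * τ) := by
    fun_prop
  have hlim := (hcont.tendsto 0).comp hw
  simp only [zero_mul, cosh_zero, integral_const, sub_zero, smul_eq_mul, mul_one] at hlim
  refine hlim.congr' ?_
  filter_upwards [hw0] with p hp
  rw [Function.comp_apply, ← integral_const_mul]
  congr 1 with s
  rw [integral_cosh_mul hp]
  ring

lemma ContinuousOn.exists_continuous_eqOn_Icc {α β : Type*} [LinearOrder α] [TopologicalSpace α]
    [OrderTopology α] [TopologicalSpace β] {f : α → β} {a b : α} (hab : a ≤ b)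
    (hf : ContinuousOn f (Icc a b)) : ∃ g : α → β, Continuous g ∧ EqOn f g (Icc a b) :=
  ⟨IccExtend hab ((Icc a b).domRestrict f),
    (continuousOn_iff_continuous_domRestrict.mp hf).Icc_extend',
    fun _ hx => (IccExtend_of_mem hab ((Icc a b).domRestrict f) hx).symm⟩

lemma tendsto_div_add_div_atTop {a : ℝ} (ha : 0 < a) (C : ℝ) :
    Tendsto (fun p => p / (C + p / a)) atTop (𝓝 a) := by
  have h := ((tendsto_const_nhds (x := C)).div_atTop tendsto_id).add_const a⁻¹ |>.inv₀
    (by simpa using ha.ne')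
  rw [zero_add, inv_inv] at h
  refine h.congr' ?_
  filter_upwards [eventually_gt_atTop 0] with p hp
  rw [id]
  field_simp

lemma tendsto_cosh_coeff {f : ℝ → ℝ} (hf : Continuous f) {w : ℝ → ℝ} (hw : Tendsto w atTop (𝓝 0))
    {a : ℝ} (ha : 0 < a) (κ C T : ℝ) :
    Tendsto (fun p => p * (κ / (C + p / a) * ∫ s in (0:ℝ)..T, f s * cosh (w p * (T - s)))) atTop
      (𝓝 (a * κ * ∫ s in (0:ℝ)..T, f s)) := by
  refine ((tendsto_div_add_div_atTop ha C).mul_const κ |>.mul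
    (tendsto_integral_mul_cosh_mul_sub hf hw T)).congr fun p => ?_
  ring

lemma tendsto_sinh_coeff {f : ℝ → ℝ} (hf : Continuous f) {w : ℝ → ℝ} (hw : Tendsto w atTop (𝓝 0))
    (hw0 : ∀ᶠ p in atTop, w p ≠ 0) {a : ℝ} (ha : 0 < a) (κ C T : ℝ) :
    Tendsto (fun p => p * (κ / (w p * (C + p / a)) * ∫ s in (0:ℝ)..T, f s * sinh (w p * (T - s))))
      atTop (𝓝 (a * κ * ∫ s in (0:ℝ)..T, f s * (T - s))) := by
  refine ((tendsto_div_add_div_atTop ha C).mul_const κ |>.mul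
    (tendsto_inv_mul_integral_mul_sinh_mul_sub hf hw hw0 T)).congr fun p => ?_
  simp only [div_eq_mul_inv, mul_inv]
  ring

lemma Filter.Tendsto.div_of_tendsto_mul {ι : Type*} {l : Filter ι} {g n d : ι → ℝ} {x y : ℝ}
    (hn : Tendsto (fun p => g p * n p) l (𝓝 x)) (hd : Tendsto (fun p => g p * d p) l (𝓝 y))
    (hy : y ≠ 0) (hg : ∀ᶠ p in l, g p ≠ 0) : Tendsto (fun p => n p / d p) l (𝓝 (x / y)) := by
  refine (hn.div hd hy).congr' ?_
  filter_upwards [hg] with p hp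
  exact mul_div_mul_left _ _ hp

lemma tendsto_coeff_of_tendsto_mul {α β γ ω S C a a' b b' : ℝ} {A A' B B' c : ℝ → ℝ}
    (hA : Tendsto (fun p => p * A p) atTop (𝓝 a)) (hA' : Tendsto (fun p => p * A' p) atTop (𝓝 a'))
    (hB : Tendsto (fun p => p * B p) atTop (𝓝 b)) (hB' : Tendsto (fun p => p * B' p) atTop (𝓝 b'))
    (hc : ∀ p, c p = ((γ / p) * A' p + (β / p) * A p) /
      (2 * (α / p) * ω * ((γ / p) * ω * S + (β / p) * C) - (γ / p) * B' p - (β / p) * B p))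
    (hL : 2 * α * ω * (γ * ω * S + β * C) - γ * b' - β * b ≠ 0) :
    Tendsto c atTop
      (𝓝 ((γ * a' + β * a) / (2 * α * ω * (γ * ω * S + β * C) - γ * b' - β * b))) := by
  have hg : ∀ᶠ p : ℝ in atTop, p ^ 2 ≠ 0 := (eventually_ne_atTop 0).mono fun _ => pow_ne_zero 2
  refine Tendsto.div_of_tendsto_mul (g := fun p => p ^ 2) ?_ ?_ hL hg |>.congr fun p => (hc p).symm
  · refine ((hA'.const_mul γ).add (hA.const_mul β)).congr' ?_
    filter_upwards [eventually_ne_atTop 0] with p hp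
    field_simp
  · refine (tendsto_const_nhds.sub (hB'.const_mul γ) |>.sub (hB.const_mul β)).congr' ?_
    filter_upwards [eventually_ne_atTop 0] with p hp
    field_simp

lemma exists_tendsto_coeff {α β γ T ω C₁ : ℝ} (hα : 0 < α) (hβ : 0 < β) (hω : 0 < ω)
    {f ωhat A B A' B' c : ℝ → ℝ} (hf : Continuous f) (hw : Tendsto ωhat atTop (𝓝 0))
    (hw0 : ∀ᶠ p in atTop, ωhat p ≠ 0)
    (hA : ∀ p, A p = (ω / (ωhat p * (C₁ + p / (2 * α)))) *
      ∫ s in (0:ℝ)..T, f s * sinh (ωhat p * (T - s)))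
    (hB : ∀ p, B p = (ω ^ 3 / (ωhat p * (C₁ + p / (2 * α)))) *
      ∫ s in (0:ℝ)..T, cosh (ω * s) * sinh (ωhat p * (T - s)))
    (hA' : ∀ p, A' p = (ω / (C₁ + p / (2 * α))) *
      ∫ s in (0:ℝ)..T, f s * cosh (ωhat p * (T - s)))
    (hB' : ∀ p, B' p = (ω ^ 3 / (C₁ + p / (2 * α))) *
      ∫ s in (0:ℝ)..T, cosh (ω * s) * cosh (ωhat p * (T - s)))
    (hc : ∀ p, c p = ((γ / p) * A' p + (β / p) * A p) /
      (2 * (α / p) * ω * ((γ / p) * ω * sinh (ω * T) + (β / p) * cosh (ω * T))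
        - (γ / p) * B' p - (β / p) * B p)) :
    ∃ L, Tendsto c atTop (𝓝 L) := by
  have ha : 0 < 2 * α := by positivity
  have hcosh : Continuous fun s => cosh (ω * s) := by fun_prop
  have hb := tendsto_sinh_coeff hcosh hw hw0 ha (ω ^ 3) C₁ T
  have hb' := tendsto_cosh_coeff hcosh hw ha (ω ^ 3) C₁ T
  rw [integral_cosh_mul_mul_sub hω.ne'] at hb
  rw [integral_cosh_mul hω.ne'] at hb'
  refine ⟨_, tendsto_coeff_of_tendsto_mul
    ((tendsto_sinh_coeff hf hw hw0 ha ω C₁ T).congr fun p => by rw [hA])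
    ((tendsto_cosh_coeff hf hw ha ω C₁ T).congr fun p => by rw [hA'])
    (hb.congr fun p => by rw [hB]) (hb'.congr fun p => by rw [hB']) hc ?_⟩
  -- the limiting denominator is `2αωβ`
  convert (by positivity : 2 * α * ω * β ≠ 0) using 2
  field_simp
  ring

lemma hasDerivWithinAt_price {α ω C₀ C₁ T t p w c d : ℝ} {D f x P : ℝ → ℝ}
    (hf : Continuous f) (hDf : EqOn (fun s => D s - C₀) f (Icc 0 T))
    (hD : HasDerivWithinAt D d (Icc 0 T) t) (ht : t ∈ Icc 0 T) (hw : w ≠ 0)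
    (hx : ∀ u, x u = (ω / (w * (C₁ + p / (2 * α)))) *
        (∫ s in (0:ℝ)..u, (D s - C₀) * sinh (w * (u - s))) +
      c * (ω ^ 3 / (w * (C₁ + p / (2 * α)))) *
        ∫ s in (0:ℝ)..u, cosh (ω * s) * sinh (w * (u - s)))
    (hP : ∀ u, P u = (D u - C₀ - (ω * p / (2 * α)) * x u + c * ω ^ 2 * cosh (ω * u)) /
      (C₁ + p / (2 * α))) :
    HasDerivWithinAt P
      ((d - ω * (p / (C₁ + p / (2 * α))) / (2 * α) *
          (ω * (∫ s in (0:ℝ)..t, f s * cosh (w * (t - s))) +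
            c * ω ^ 3 * ∫ s in (0:ℝ)..t, cosh (ω * s) * cosh (w * (t - s))) +
        c * ω ^ 3 * sinh (ω * t)) / (C₁ + p / (2 * α))) (Icc 0 T) t := by
  set K := C₁ + p / (2 * α)
  have hxf : ∀ u ∈ Icc 0 T, x u = ω / (w * K) * (∫ s in (0:ℝ)..u, f s * sinh (w * (u - s))) +
      c * (ω ^ 3 / (w * K)) * ∫ s in (0:ℝ)..u, cosh (ω * s) * sinh (w * (u - s)) := by
    intro u hu
    rw [hx, integral_congr fun s hs => congrArg (· * sinh (w * (u - s)))
      (hDf (Icc_subset_Icc_right hu.2 (uIcc_of_le hu.1 ▸ hs)))]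
  have hx' := (((hasDerivAt_integral_mul_sinh_mul_sub hf w t).const_mul (ω / (w * K))).add
    ((hasDerivAt_integral_mul_sinh_mul_sub (f := fun s => cosh (ω * s)) (by fun_prop) w t).const_mul
      (c * (ω ^ 3 / (w * K))))).hasDerivWithinAt.congr hxf (hxf t ht)
  have hωu : HasDerivAt (ω * ·) ω t := by simpa using (hasDerivAt_id t).const_mul ω
  rw [show P = fun u => (D u - C₀ - (ω * p / (2 * α)) * x u + c * ω ^ 2 * cosh (ω * u)) / K
    from funext hP]
  refine ((((hD.sub_const C₀).sub (hx'.const_mul _)).add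
    (((hasDerivAt_cosh _).comp t hωu).hasDerivWithinAt.const_mul _)).div_const K).congr_deriv ?_
  field_simp

theorem stmt_18_general (α β γ T : ℝ) (hα : 0 < α) (hβ : 0 < β) (hT : 0 < T)
    (ω : ℝ) (hω : ω = Real.sqrt (β / α))
    (C₀ C₁ : ℝ) (hC₁ : 0 < C₁)
    (D : ℝ → ℝ) (hD : ContDiffOn ℝ 1 D (Set.Icc 0 T))
    (ωhat : ℝ → ℝ) (hωhat : ∀ p, ωhat p = ω * Real.sqrt (C₁ / (C₁ + p / (2 * α))))
    (A B A' B' : ℝ → ℝ)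
    (hA : ∀ p, A p = (ω / (ωhat p * (C₁ + p / (2 * α)))) *
      ∫ s in (0:ℝ)..T, (D s - C₀) * Real.sinh (ωhat p * (T - s)))
    (hB : ∀ p, B p = (ω ^ 3 / (ωhat p * (C₁ + p / (2 * α)))) *
      ∫ s in (0:ℝ)..T, Real.cosh (ω * s) * Real.sinh (ωhat p * (T - s)))
    (hA' : ∀ p, A' p = (ω / (C₁ + p / (2 * α))) *
      ∫ s in (0:ℝ)..T, (D s - C₀) * Real.cosh (ωhat p * (T - s)))
    (hB' : ∀ p, B' p = (ω ^ 3 / (C₁ + p / (2 * α))) *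
      ∫ s in (0:ℝ)..T, Real.cosh (ω * s) * Real.cosh (ωhat p * (T - s)))
    (c : ℝ → ℝ)
    (hc : ∀ p, c p = ((γ / p) * A' p + (β / p) * A p) /
      (2 * (α / p) * ω * ((γ / p) * ω * Real.sinh (ω * T) + (β / p) * Real.cosh (ω * T))
        - (γ / p) * B' p - (β / p) * B p))
    (X : ℝ → ℝ → ℝ)
    (hX : ∀ p t, X p t = (ω / (ωhat p * (C₁ + p / (2 * α)))) *
        (∫ s in (0:ℝ)..t, (D s - C₀) * Real.sinh (ωhat p * (t - s))) +
      c p * (ω ^ 3 / (ωhat p * (C₁ + p / (2 * α)))) *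
        ∫ s in (0:ℝ)..t, Real.cosh (ω * s) * Real.sinh (ωhat p * (t - s)))
    (P : ℝ → ℝ → ℝ)
    (hP : ∀ p t, P p t =
      (D t - C₀ - (ω * p / (2 * α)) * X p t + c p * ω ^ 2 * Real.cosh (ω * t)) /
        (C₁ + p / (2 * α))) :
    ∀ t ∈ Set.Icc (0 : ℝ) T,
      (∀ p > 0, DifferentiableWithinAt ℝ (fun s => P p s) (Set.Icc 0 T) t) ∧
      Filter.Tendsto (fun p => derivWithin (fun s => P p s) (Set.Icc 0 T) t)
        Filter.atTop (nhds 0) := by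
  intro t ht
  have hω0 : 0 < ω := hω ▸ sqrt_pos.mpr (div_pos hβ hα)
  have hK : Tendsto (fun p => C₁ + p / (2 * α)) atTop atTop :=
    tendsto_atTop_add_const_left _ C₁ (tendsto_id.atTop_div_const (by positivity))
  have hw0 : ∀ p > 0, ωhat p ≠ 0 := fun p hp => by rw [hωhat]; positivity
  have hw : Tendsto ωhat atTop (𝓝 0) := by
    rw [show ωhat = _ from funext hωhat]
    simpa [Function.comp_def] using
      ((continuous_sqrt.tendsto 0).comp (tendsto_const_nhds.div_atTop hK)).const_mul ω
  obtain ⟨f, hf, hDf⟩ := (hD.continuousOn.sub continuousOn_const).exists_continuous_eqOn_Icc hT.le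
  have hDfT : ∀ k : ℝ → ℝ, ∫ s in (0:ℝ)..T, (D s - C₀) * k s = ∫ s in (0:ℝ)..T, f s * k s :=
    fun k => integral_congr fun s hs => congrArg (· * k s) (hDf (uIcc_of_le hT.le ▸ hs))
  obtain ⟨L, hcL⟩ := exists_tendsto_coeff hα hβ hω0 hf hw ((eventually_gt_atTop 0).mono hw0)
    (fun p => by rw [hA, hDfT]) hB (fun p => by rw [hA', hDfT]) hB' hc
  obtain ⟨d, hd⟩ : ∃ d, HasDerivWithinAt D d (Icc 0 T) t :=
    ⟨_, (hD.differentiableOn one_ne_zero t ht).hasDerivWithinAt⟩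
  have hP' := fun p (hp : 0 < p) => hasDerivWithinAt_price hf hDf hd ht (hw0 p hp) (hX p) (hP p)
  refine ⟨fun p hp => (hP' p hp).differentiableWithinAt, ?_⟩
  have hlim := (((tendsto_const_nhds (x := d)).sub
      ((((tendsto_div_add_div_atTop (by positivity : 0 < 2 * α) C₁).const_mul ω).div_const
          (2 * α)).mul (((tendsto_integral_mul_cosh_mul_sub hf hw t).const_mul ω).add
        ((hcL.mul_const (ω ^ 3)).mul (tendsto_integral_mul_cosh_mul_sub
          (f := fun s => cosh (ω * s)) (by fun_prop) hw t))))).add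
      ((hcL.mul_const (ω ^ 3)).mul_const (sinh (ω * t)))).div_atTop hK
  refine hlim.congr' ?_
  filter_upwards [eventually_gt_atTop 0] with p hp
  exact ((hP' p hp).derivWithin (uniqueDiffOn_Icc hT t ht)).symm

/-- (Proposition 3.2, part 2) Assume `D` is continuously differentiable on `[0,T]`. Let
`P^p(t)` denote the equilibrium price of Theorem 3.1 computed with storage parameters
`(α/p, β/p, γ/p)`. Then `t ↦ P^p(t)` is differentiable on `[0,T]` and, for every
`t ∈ [0,T]`, `lim_{p→+∞} (d/dt)P^p(t) = 0`. -/
theorem stmt_18 (α β γ T : ℝ) (hα : 0 < α) (hβ : 0 < β) (hγ : 0 < γ) (hT : 0 < T)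
    (ω : ℝ) (hω : ω = Real.sqrt (β / α))
    (C₀ C₁ : ℝ) (hC₁ : 0 < C₁)
    (D : ℝ → ℝ) (hD : ContDiffOn ℝ 1 D (Set.Icc 0 T))
    (ωhat : ℝ → ℝ) (hωhat : ∀ p, ωhat p = ω * Real.sqrt (C₁ / (C₁ + p / (2 * α))))
    (A B A' B' : ℝ → ℝ)
    (hA : ∀ p, A p = (ω / (ωhat p * (C₁ + p / (2 * α)))) *
      ∫ s in (0:ℝ)..T, (D s - C₀) * Real.sinh (ωhat p * (T - s)))
    (hB : ∀ p, B p = (ω ^ 3 / (ωhat p * (C₁ + p / (2 * α)))) *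
      ∫ s in (0:ℝ)..T, Real.cosh (ω * s) * Real.sinh (ωhat p * (T - s)))
    (hA' : ∀ p, A' p = (ω / (C₁ + p / (2 * α))) *
      ∫ s in (0:ℝ)..T, (D s - C₀) * Real.cosh (ωhat p * (T - s)))
    (hB' : ∀ p, B' p = (ω ^ 3 / (C₁ + p / (2 * α))) *
      ∫ s in (0:ℝ)..T, Real.cosh (ω * s) * Real.cosh (ωhat p * (T - s)))
    (hden : ∀ p > 0,
      2 * (α / p) * ω * ((γ / p) * ω * Real.sinh (ω * T) + (β / p) * Real.cosh (ω * T))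
        - (γ / p) * B' p - (β / p) * B p ≠ 0)
    (c : ℝ → ℝ)
    (hc : ∀ p, c p = ((γ / p) * A' p + (β / p) * A p) /
      (2 * (α / p) * ω * ((γ / p) * ω * Real.sinh (ω * T) + (β / p) * Real.cosh (ω * T))
        - (γ / p) * B' p - (β / p) * B p))
    (X : ℝ → ℝ → ℝ)
    (hX : ∀ p t, X p t = (ω / (ωhat p * (C₁ + p / (2 * α)))) *
        (∫ s in (0:ℝ)..t, (D s - C₀) * Real.sinh (ωhat p * (t - s))) +
      c p * (ω ^ 3 / (ωhat p * (C₁ + p / (2 * α)))) *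
        ∫ s in (0:ℝ)..t, Real.cosh (ω * s) * Real.sinh (ωhat p * (t - s)))
    (P : ℝ → ℝ → ℝ)
    (hP : ∀ p t, P p t =
      (D t - C₀ - (ω * p / (2 * α)) * X p t + c p * ω ^ 2 * Real.cosh (ω * t)) /
        (C₁ + p / (2 * α))) :
    ∀ t ∈ Set.Icc (0 : ℝ) T,
      (∀ p > 0, DifferentiableWithinAt ℝ (fun s => P p s) (Set.Icc 0 T) t) ∧
      Filter.Tendsto (fun p => derivWithin (fun s => P p s) (Set.Icc 0 T) t)
        Filter.atTop (nhds 0) :=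
  stmt_18_general α β γ T hα hβ hT ω hω C₀ C₁ hC₁ D hD ωhat hωhat A B A' B' hA hB hA' hB' c hc X hX
    P hP
end
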